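/- arXiv:2101.11910 — 3 statements merged into one kernel-verified Lean document; each statement's English description precedes it below -/
import Mathlib

section
/- The number of forests on vertex set {1,...,n} consisting of exactly t tree components such that the vertices 1,...,t all lie in different tree components equals t · n^{n−t−1}, for 1 ≤ t ≤ n. -/
open scoped Classical BigOperators
open Finset Filter

noncomputable section

/-- Rooted isomorphism between rooted graphs. -/
def RootedIso {V1 : Type*} {V2 : Type*} (G1 : SimpleGraph V1) (r1 : V1)
    (G2 : SimpleGraph V2) (r2 : V2) : Prop :=
  ∃ e : G1 ≃g G2, e r1 = r2

/-- Vertex set of the ball of radius `ℓ` around `r`. -/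
def ballSet {V : Type*} (G : SimpleGraph V) (r : V) (ℓ : ℕ) : Set V :=
  {v | G.Reachable r v ∧ G.dist r v ≤ ℓ}

lemma root_mem_ballSet {V : Type*} (G : SimpleGraph V) (r : V) (ℓ : ℕ) :
    r ∈ ballSet G r ℓ := ⟨SimpleGraph.Reachable.refl r, by rw [SimpleGraph.dist_self]; exact Nat.zero_le ℓ⟩

/-- `B_ℓ(G, r) ≅ (H, rH)`. -/
def BallIso {V W : Type*} (G : SimpleGraph V) (r : V) (ℓ : ℕ)
    (H : SimpleGraph W) (rH : W) : Prop :=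
  RootedIso (G.induce (ballSet G r ℓ)) ⟨r, root_mem_ballSet G r ℓ⟩ H rH

/-- For a uniformly random sample point `ω ∈ S` and a uniformly random root in `roots ω`,
the probability that the ball of radius `ℓ` around the root in `graph ω` is rooted-isomorphic
to `(H, rH)`. -/
def sampleBallProb {Ω : Type*} {V : Type*} (S : Finset Ω)
    (graph : Ω → SimpleGraph V) (roots : Ω → Finset V) (ℓ : ℕ)
    {W : Type*} (H : SimpleGraph W) (rH : W) : ℝ :=
  (S.card : ℝ)⁻¹ * ∑ ω ∈ S, ((roots ω).card : ℝ)⁻¹ *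
    ((roots ω).filter (fun v => BallIso (graph ω) v ℓ H rH)).card

/-! ### Plane trees, encoded by their sets of addresses -/

/-- A (finite) plane tree, encoded as the set of addresses of its vertices:
the root is `[]`, and the children of `l` are `l ++ [0], …, l ++ [d-1]`. -/
def IsPlaneTree (T : Finset (List ℕ)) : Prop :=
  [] ∈ T ∧ ∀ (l : List ℕ) (i : ℕ), l ++ [i] ∈ T → l ∈ T ∧ ∀ j < i, l ++ [j] ∈ T

/-- Number of children of the vertex `l` in the plane tree `T`. -/
def childCount (T : Finset (List ℕ)) (l : List ℕ) : ℕ :=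
  (T.filter (fun x => ∃ i : ℕ, x = l ++ [i])).card

/-- The Poisson point probabilities. -/
def poissonPMF (c : ℝ) (k : ℕ) : ℝ := Real.exp (-c) * c ^ k / (Nat.factorial k)

/-- The probability that the Galton--Watson tree with offspring distribution
Poisson(c) equals the plane tree `T`. -/
def gwWeight (c : ℝ) (T : Finset (List ℕ)) : ℝ :=
  ∏ l ∈ T, poissonPMF c (childCount T l)

/-- The probability that the truncation at depth `ℓ` of the Poisson(c)
Galton--Watson tree equals the plane tree `T` (of depth at most `ℓ`). -/
def gwTruncWeight (c : ℝ) (ℓ : ℕ) (T : Finset (List ℕ)) : ℝ :=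
  ∏ l ∈ T.filter (fun l => l.length < ℓ), poissonPMF c (childCount T l)

/-- The plane tree `T` as a simple graph on its addresses. -/
def treeGraph (T : Finset (List ℕ)) : SimpleGraph {l : List ℕ // l ∈ T} :=
  SimpleGraph.fromRel (fun a b => ∃ i : ℕ, (b : List ℕ) = (a : List ℕ) ++ [i])

/-- The root of a plane tree, as a vertex of `treeGraph`. -/
def treeRoot (T : Finset (List ℕ)) (hT : [] ∈ T) : {l : List ℕ // l ∈ T} := ⟨[], hT⟩

/-- `P(|GW_c| = k)`: probability that the Poisson(c) Galton--Watson tree has `k` vertices. -/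
def gwSizeProb (c : ℝ) (k : ℕ) : ℝ :=
  ∑' T : {T : Finset (List ℕ) // IsPlaneTree T ∧ T.card = k}, gwWeight c T.1

/-- `P(GW_c ≅ (H, rH))` as rooted graphs. -/
def gwIsoProb (c : ℝ) {W : Type*} (H : SimpleGraph W) (rH : W) : ℝ :=
  ∑' T : {T : Finset (List ℕ) // IsPlaneTree T},
    if RootedIso (treeGraph T.1) (treeRoot T.1 T.2.1) H rH then gwWeight c T.1 else 0

/-- `P(|GW_c| = k and GW_c ≅ (H, rH))`. -/
def gwIsoSizeProb (c : ℝ) (k : ℕ) {W : Type*} (H : SimpleGraph W) (rH : W) : ℝ :=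
  ∑' T : {T : Finset (List ℕ) // IsPlaneTree T ∧ T.card = k},
    if RootedIso (treeGraph T.1) (treeRoot T.1 T.2.1.1) H rH then gwWeight c T.1 else 0

/-- `P(B_ℓ(GW_c) ≅ (H, rH))`. -/
def gwBallProb (c : ℝ) (ℓ : ℕ) {W : Type*} (H : SimpleGraph W) (rH : W) : ℝ :=
  ∑' T : {T : Finset (List ℕ) // IsPlaneTree T ∧ ∀ l ∈ T, l.length ≤ ℓ},
    if RootedIso (treeGraph T.1) (treeRoot T.1 T.2.1.1) H rH then gwTruncWeight c ℓ T.1 else 0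

/-! ### The Skeleton tree with `d` rays and its balls -/

/-- Adjacency of the spine positions: a root position and `d` rays of length `ℓ`. -/
def spineAdj {d ℓ : ℕ} : (Unit ⊕ Fin d × Fin ℓ) → (Unit ⊕ Fin d × Fin ℓ) → Prop
  | Sum.inl _, Sum.inr (_, j) => (j : ℕ) = 0
  | Sum.inr (i, j), Sum.inr (i', j') => i = i' ∧ (j : ℕ) + 1 = (j' : ℕ)
  | _, _ => False

/-- The truncation radius of the Galton--Watson tree sitting at a spine position,
for the ball of radius `ℓ` around the root of the Skeleton tree with `d` rays. -/
def skelRad {d : ℕ} (ℓ : ℕ) : (Unit ⊕ Fin d × Fin ℓ) → ℕ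
  | Sum.inl _ => ℓ
  | Sum.inr (_, j) => ℓ - ((j : ℕ) + 1)

/-- Families of truncated plane trees indexing the possible balls of radius `ℓ`
of the Skeleton tree with `d` rays. -/
def SkelFam (d ℓ : ℕ) :=
  {T : (Unit ⊕ Fin d × Fin ℓ) → Finset (List ℕ) //
    ∀ i, IsPlaneTree (T i) ∧ ∀ l ∈ T i, l.length ≤ skelRad ℓ i}

/-- Vertices of the graph assembled from a family of plane trees along the spine. -/
def SkelVert {d ℓ : ℕ} (T : (Unit ⊕ Fin d × Fin ℓ) → Finset (List ℕ)) :=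
  {p : (Unit ⊕ Fin d × Fin ℓ) × List ℕ // p.2 ∈ T p.1}

/-- The graph assembled from a family of plane trees along the spine:
tree edges inside each tree, and spine edges between the roots of the trees. -/
def skelGraph {d ℓ : ℕ} (T : (Unit ⊕ Fin d × Fin ℓ) → Finset (List ℕ)) :
    SimpleGraph (SkelVert T) :=
  SimpleGraph.fromRel (fun a b =>
    (a.1.1 = b.1.1 ∧ ∃ i : ℕ, b.1.2 = a.1.2 ++ [i]) ∨
    (a.1.2 = [] ∧ b.1.2 = [] ∧ spineAdj a.1.1 b.1.1))

/-- The root of the assembled graph. -/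
def skelRoot {d ℓ : ℕ} (T : SkelFam d ℓ) : SkelVert T.1 :=
  ⟨(Sum.inl (), []), (T.2 (Sum.inl ())).1.1⟩

/-- `P(B_ℓ(Skeleton tree with d rays) ≅ (H, rH))`.  (The Skeleton tree with `d` rays is
obtained from the root with `d` infinite rays attached by replacing every vertex with an
independent Poisson(1) Galton--Watson tree; the Skeleton tree itself is the case `d = 1`.) -/
def skeletonBallProb (d ℓ : ℕ) {W : Type*} (H : SimpleGraph W) (rH : W) : ℝ :=
  ∑' T : SkelFam d ℓ,
    if RootedIso (skelGraph T.1) (skelRoot T) H rH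
    then ∏ i, gwTruncWeight 1 (skelRad ℓ i) (T.1 i) else 0

/-! ### The rooted tree `P_d`: a root with `d` infinite rays -/

def rayAdj {d : ℕ} : (Unit ⊕ Fin d × ℕ) → (Unit ⊕ Fin d × ℕ) → Prop
  | Sum.inl _, Sum.inr (_, j) => j = 0
  | Sum.inr (i, j), Sum.inr (i', j') => i = i' ∧ j + 1 = j'
  | _, _ => False

/-- `P_d`: the rooted tree whose root has degree `d` and all of whose
other vertices have degree 2. -/
def rayGraph (d : ℕ) : SimpleGraph (Unit ⊕ Fin d × ℕ) := SimpleGraph.fromRel rayAdj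

def rayRoot (d : ℕ) : Unit ⊕ Fin d × ℕ := Sum.inl ()

/-! ### Finite uniform models -/

/-- The graphs on `[n]` with exactly `m` edges. -/
def graphClass (n m : ℕ) : Finset (SimpleGraph (Fin n)) :=
  univ.filter (fun G => G.edgeFinset.card = m)

/-- The forests on `[n]` with exactly `t` tree components in which the
vertices `1, …, t` all lie in different tree components. -/
def forestSet (n t : ℕ) : Finset (SimpleGraph (Fin n)) :=
  univ.filter (fun G => G.IsAcyclic ∧ Fintype.card G.ConnectedComponent = t ∧
    ∀ i j : Fin n, (i : ℕ) < t → (j : ℕ) < t → G.Reachable i j → i = j)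

/-- The labelled trees on `[k]`. -/
def treeSet (k : ℕ) : Finset (SimpleGraph (Fin k)) :=
  univ.filter (fun G => G.IsTree)

/-- No component of `G` is complex, i.e. every component has at most as many
edges as vertices (counting edges inside a component via ordered adjacent pairs). -/
def NoComplexComponent {n : ℕ} (G : SimpleGraph (Fin n)) : Prop :=
  ∀ v : Fin n,
    ((univ : Finset (Fin n × Fin n)).filter
        (fun p => G.Adj p.1 p.2 ∧ G.Reachable v p.1)).card ≤
      2 * (univ.filter (fun w => G.Reachable v w)).card

/-- The Borel(1) probability `e^{-k} k^{k-1}/k!`. -/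
def borelProb (k : ℕ) : ℝ :=
  Real.exp (-(k : ℝ)) * (k : ℝ) ^ (k - 1) / (Nat.factorial k)

/-! ### Random rooted graphs as probability measures -/

instance : MeasurableSpace (SimpleGraph ℕ) := ⊤

/-- Ball probability of a random rooted (countable) graph given as a measure. -/
def mBallProb (μ : MeasureTheory.Measure (SimpleGraph ℕ × ℕ)) (ℓ : ℕ)
    {W : Type*} (H : SimpleGraph W) (rH : W) : ℝ :=
  (μ {p | BallIso p.1 p.2 ℓ H rH}).toReal


/-!
Call a map `f : α → α` rooted at `R` if it fixes `R` pointwise and has no periodic points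
outside `R`. Sending every non-root vertex to its neighbour towards the root of its component
identifies the forests rooted at `R` with these maps, the forest being recovered as the
functional graph of the map. Let `A(R)` be their number and `n = |α|`. Sorting the `n ^ #Rᶜ`
maps that fix `R` by their set `C` of periodic points outside `R` splits each of them into a
permutation of `C` and a map rooted at `R ∪ C`, so `n ^ #Rᶜ = ∑_{C ⊆ Rᶜ} #C! · A(R ∪ C)`. This
recurrence determines `A`, and `n · A(R) = #R · n ^ #Rᶜ` satisfies it by a telescoping sum.
-/

namespace Function

variable {α : Type*} {f g : α → α} {s : Set α} {x : α}

theorem mem_of_iterate_mem_of_mem_periodicPts (hs : Set.MapsTo f s s) (hx : x ∈ periodicPts f)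
    {n : ℕ} (hn : f^[n] x ∈ s) : x ∈ s := by
  obtain ⟨m, hm, hper⟩ := mem_periodicPts.1 hx
  have hle : n ≤ m * n := Nat.le_mul_of_pos_left n hm
  have hx' : f^[m * n - n] (f^[n] x) = x := by
    rw [← iterate_add_apply, Nat.sub_add_cancel hle]
    exact (hper.mul_const n).eq
  exact hx' ▸ hs.iterate _ hn

theorem mem_periodicPts_of_eqOn_compl (hs : Set.MapsTo f s s) (hfg : Set.EqOn f g sᶜ)
    (hx : x ∈ periodicPts f) (hxs : x ∉ s) : x ∈ periodicPts g := by
  have horb (n : ℕ) : f^[n] x ∈ sᶜ := fun hn =>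
    hxs (mem_of_iterate_mem_of_mem_periodicPts hs hx hn)
  have hiter (n : ℕ) : g^[n] x = f^[n] x := by
    induction n with
    | zero => rfl
    | succ n ih => rw [iterate_succ_apply', iterate_succ_apply', ih, hfg (horb n)]
  obtain ⟨m, hm, hper⟩ := mem_periodicPts.1 hx
  exact mk_mem_periodicPts hm ((hiter m).trans hper)

theorem mem_periodicPts_of_injOn (hs : s.Finite) (hm : Set.MapsTo f s s) (hi : Set.InjOn f s)
    (hx : x ∈ s) : x ∈ periodicPts f := by
  have := hs.to_subtype
  obtain ⟨m, hm0, hper⟩ :=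
    mem_periodicPts.1 (((hm.restrict_inj).2 hi).mem_periodicPts ⟨x, hx⟩)
  refine mk_mem_periodicPts hm0 ?_
  simpa [IsPeriodicPt, IsFixedPt, Set.MapsTo.coe_iterate_restrict] using congrArg Subtype.val hper

theorem iterate_card_mem_periodicPts [Fintype α] (f : α → α) (x : α) :
    f^[Fintype.card α] x ∈ periodicPts f := by
  obtain ⟨a, b, hab, heq⟩ := Fintype.exists_ne_map_eq_of_card_lt
    (fun i : Fin (Fintype.card α + 1) => f^[i] x) (by simp)
  wlog hlt : a < b generalizing a b
  · exact this b a hab.symm heq.symm (lt_of_le_of_ne (not_lt.1 hlt) hab.symm)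
  have hper : f^[a] x ∈ periodicPts f := by
    refine mk_mem_periodicPts (Nat.sub_pos_of_lt hlt) ?_
    change f^[b - a] (f^[a] x) = f^[a] x
    rw [← iterate_add_apply, Nat.sub_add_cancel hlt.le]
    exact heq.symm
  have := (bijOn_periodicPts f).mapsTo.iterate (Fintype.card α - a) hper
  rwa [← iterate_add_apply, Nat.sub_add_cancel (by omega)] at this

theorem periodicPts_subset_of_rank (hs : Set.MapsTo f s s) (ρ : α → ℕ)
    (hρ : ∀ x ∉ s, ρ (f x) < ρ x) : periodicPts f ⊆ s := by
  intro x hx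
  by_contra hxs
  have horb (n : ℕ) : f^[n] x ∉ s := fun hn =>
    hxs (mem_of_iterate_mem_of_mem_periodicPts hs hx hn)
  have hdesc (n : ℕ) : ρ (f^[n] x) + n ≤ ρ x := by
    induction n with
    | zero => simp
    | succ n ih =>
      rw [iterate_succ_apply']
      have := hρ _ (horb n)
      omega
  obtain ⟨m, hm, hper⟩ := mem_periodicPts.1 hx
  have := hdesc m
  rw [hper.eq] at this
  omega

theorem exists_rank_of_periodicPts_subset [Fintype α] (h : periodicPts f ⊆ s) :
    ∃ ρ : α → ℕ, ∀ x ∉ s, ρ (f x) < ρ x := by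
  have hex (x : α) : ∃ n, f^[n] x ∈ s := ⟨_, h (iterate_card_mem_periodicPts f x)⟩
  refine ⟨fun x => Nat.find (hex x), fun x hx => ?_⟩
  have hpos : 0 < Nat.find (hex x) :=
    Nat.pos_of_ne_zero fun h0 => hx (by simpa [h0] using Nat.find_spec (hex x))
  refine (Nat.find_le ?_).trans_lt (Nat.pred_lt hpos.ne')
  rw [← iterate_succ_apply, Nat.succ_pred_eq_of_pos hpos]
  exact Nat.find_spec (hex x)

end Function

section Counting

open Function Equiv
open scoped Nat

variable {α : Type*} [Fintype α]

def fixingMaps (R : Finset α) : Finset (α → α) := {f | ∀ x ∈ R, f x = x}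

def rootedMaps (R : Finset α) : Finset (α → α) := {f ∈ fixingMaps R | periodicPts f ⊆ R}

variable {R C : Finset α} {f : α → α}

@[simp] theorem mem_fixingMaps : f ∈ fixingMaps R ↔ ∀ x ∈ R, f x = x := by simp [fixingMaps]

@[simp] theorem mem_rootedMaps :
    f ∈ rootedMaps R ↔ (∀ x ∈ R, f x = x) ∧ periodicPts f ⊆ R := by simp [rootedMaps]

theorem mapsTo_of_mem_fixingMaps (hf : f ∈ fixingMaps R) : Set.MapsTo f R R :=
  fun x hx => by rw [mem_fixingMaps.1 hf x hx]; exact hx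

variable [DecidableEq α]

def cyclicPart (R : Finset α) (f : α → α) : Finset α := {x ∈ Rᶜ | x ∈ periodicPts f}

@[simp] theorem mem_cyclicPart {x : α} :
    x ∈ cyclicPart R f ↔ x ∉ R ∧ x ∈ periodicPts f := by simp [cyclicPart]

theorem card_fixingMaps (R : Finset α) : #(fixingMaps R) = Fintype.card α ^ #Rᶜ := by
  have : fixingMaps R = Fintype.piFinset fun x => if x ∈ R then {x} else univ := by
    ext f
    simp only [mem_fixingMaps, Fintype.mem_piFinset]
    refine forall_congr' fun x => ?_
    split_ifs <;> simp [*]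
  rw [this, Fintype.card_piFinset]
  simp [apply_ite, Finset.prod_ite, Finset.filter_not, Finset.compl_eq_univ_sdiff]

theorem bijOn_cyclicPart (hf : f ∈ fixingMaps R) :
    Set.BijOn f (cyclicPart R f) (cyclicPart R f) := by
  have hmaps : Set.MapsTo f (cyclicPart R f) (cyclicPart R f) := by
    intro x hx
    rw [Finset.mem_coe, mem_cyclicPart] at hx ⊢
    exact ⟨fun hfx => hx.1 (mem_of_iterate_mem_of_mem_periodicPts (n := 1)
      (mapsTo_of_mem_fixingMaps hf) hx.2 hfx), (bijOn_periodicPts f).mapsTo hx.2⟩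
  refine ((cyclicPart R f).finite_toSet.injOn_iff_bijOn_of_mapsTo hmaps).1 ?_
  exact (bijOn_periodicPts f).injOn.mono fun x hx => (mem_cyclicPart.1 hx).2

theorem piecewise_mem_rootedMaps (R : Finset α) (f : α → α) :
    (R ∪ cyclicPart R f).piecewise id f ∈ rootedMaps (R ∪ cyclicPart R f) := by
  set g := (R ∪ cyclicPart R f).piecewise id f
  have hfix : ∀ x ∈ R ∪ cyclicPart R f, g x = x := fun x hx => by simp [g, hx]
  refine mem_rootedMaps.2 ⟨hfix, fun x hx => ?_⟩
  by_contra hxs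
  rw [Finset.mem_coe, Finset.mem_union, not_or] at hxs
  have hfx : x ∈ periodicPts f := by
    refine mem_periodicPts_of_eqOn_compl (s := ↑(R ∪ cyclicPart R f))
      (fun y hy => by rw [hfix y hy]; exact hy) (fun y hy => ?_) hx (by simpa using hxs)
    simp_all [g]
  exact hxs.2 (mem_cyclicPart.2 ⟨hxs.1, hfx⟩)

theorem piecewise_ofSubtype_mem_filter (hC : C ⊆ Rᶜ) (σ : Perm C) {g : α → α}
    (hg : g ∈ rootedMaps (R ∪ C)) :
    C.piecewise (Perm.ofSubtype σ) g ∈ {f ∈ fixingMaps R | cyclicPart R f = C} := by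
  set h := C.piecewise (Perm.ofSubtype σ) g
  have hσ : Set.EqOn h (Perm.ofSubtype σ) C := fun x hx => C.piecewise_eq_of_mem _ _ hx
  have hg' : Set.EqOn h g (↑C)ᶜ := fun x hx => C.piecewise_eq_of_notMem _ _ hx
  have hmaps : Set.MapsTo h C C := fun x hx => by
    rw [hσ hx, Perm.ofSubtype_apply_of_mem σ hx]; exact (σ ⟨x, hx⟩).2
  have hinj : Set.InjOn h C := fun x hx y hy hxy => by
    rw [hσ hx, hσ hy] at hxy; exact (Perm.ofSubtype σ).injective hxy
  obtain ⟨hgfix, hgper⟩ := mem_rootedMaps.1 hg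
  refine mem_filter.2 ⟨mem_fixingMaps.2 fun x hx => ?_, Finset.ext fun x => ?_⟩
  · have hxC : x ∉ C := fun hxC => Finset.mem_compl.1 (hC hxC) hx
    rw [hg' hxC, hgfix x (Finset.mem_union_left _ hx)]
  · rw [mem_cyclicPart]
    refine ⟨fun ⟨hxR, hx⟩ => ?_, fun hx => ⟨Finset.mem_compl.1 (hC hx),
      mem_periodicPts_of_injOn C.finite_toSet hmaps hinj hx⟩⟩
    by_contra hxC
    have := hgper (mem_periodicPts_of_eqOn_compl hmaps hg' hx hxC)
    simp_all

theorem card_filter_cyclicPart_eq (hC : C ⊆ Rᶜ) :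
    #{f ∈ fixingMaps R | cyclicPart R f = C} = (#C)! * #(rootedMaps (R ∪ C)) := by
  rw [← Fintype.card_coe C, ← Fintype.card_perm, ← card_univ, ← card_product]
  refine card_bij'
    (fun f hf => (Set.BijOn.equiv f
      ((mem_filter.1 hf).2 ▸ bijOn_cyclicPart (mem_filter.1 hf).1), (R ∪ C).piecewise id f))
    (fun p _ => C.piecewise (Perm.ofSubtype p.1) p.2) ?_ ?_ ?_ ?_
  · intro f hf
    obtain ⟨-, rfl⟩ := mem_filter.1 hf
    exact mem_product.2 ⟨mem_univ _, piecewise_mem_rootedMaps R f⟩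
  · intro p hp
    exact piecewise_ofSubtype_mem_filter hC p.1 (mem_product.1 hp).2
  · intro f hf
    funext x
    by_cases hxC : x ∈ C
    · simp [hxC, Perm.ofSubtype_apply_of_mem, Set.BijOn.equiv]
    · have := (mem_fixingMaps.1 (mem_filter.1 hf).1 x)
      by_cases hxR : x ∈ R <;> simp_all
  · rintro ⟨σ, g⟩ hp
    obtain ⟨hgfix, -⟩ := mem_rootedMaps.1 (mem_product.1 hp).2
    refine Prod.ext (Equiv.ext fun y => Subtype.ext ?_) (funext fun x => ?_)
    · simp [Set.BijOn.equiv, Perm.ofSubtype_apply_of_mem]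
    · by_cases hx : x ∈ R ∪ C
      · simpa [hx] using (hgfix x hx).symm
      · simp_all

theorem sum_factorial_mul_card_rootedMaps (R : Finset α) :
    ∑ C ∈ Rᶜ.powerset, (#C)! * #(rootedMaps (R ∪ C)) = Fintype.card α ^ #Rᶜ := by
  rw [← card_fixingMaps, card_eq_sum_card_fiberwise (f := cyclicPart R) (t := Rᶜ.powerset)
    fun f _ => mem_powerset.2 (filter_subset _ _)]
  exact (sum_congr rfl fun C hC => card_filter_cyclicPart_eq (mem_powerset.1 hC)).symm

theorem sum_choose_mul_factorial_mul_pow (m k : ℕ) :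
    ∑ c ∈ range (k + 1), k.choose c * c ! * ((m + c) * (m + k) ^ (k - c)) =
      (m + k) ^ (k + 1) := by
  set H : ℕ → ℤ := fun c => k.descFactorial c * ((m + k : ℕ) : ℤ) ^ (k + 1 - c)
  have hterm : ∀ c ∈ range (k + 1),
      ((k.choose c * c ! * ((m + c) * (m + k) ^ (k - c)) : ℕ) : ℤ) = H c - H (c + 1) := by
    intro c hc
    have hck : c ≤ k := Nat.lt_succ_iff.1 (mem_range.1 hc)
    simp only [H]
    rw [show k + 1 - c = k - c + 1 by omega, show k + 1 - (c + 1) = k - c by omega,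
      Nat.descFactorial_succ, Nat.descFactorial_eq_factorial_mul_choose]
    push_cast [Nat.cast_sub hck]
    ring
  have h := sum_range_sub' H (k + 1)
  rw [← sum_congr rfl hterm] at h
  simp only [H, Nat.descFactorial_zero, Nat.descFactorial_of_lt (Nat.lt_succ_self k),
    Nat.cast_zero, Nat.cast_one, zero_mul, one_mul, Nat.sub_zero, sub_zero] at h
  exact_mod_cast h

theorem card_mul_card_rootedMaps (R : Finset α) :
    Fintype.card α * #(rootedMaps R) = #R * Fintype.card α ^ #Rᶜ := by
  set N := Fintype.card α with hNdef
  induction h : #Rᶜ using Nat.strong_induction_on generalizing R with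
  | _ k ih =>
  have hN : #R + k = N := by rw [← h, card_add_card_compl]
  have hrec : ∑ C ∈ Rᶜ.powerset, (#C)! * (N * #(rootedMaps (R ∪ C))) = N ^ (k + 1) := by
    rw [pow_succ', ← h, ← sum_factorial_mul_card_rootedMaps R, mul_sum]
    exact sum_congr rfl fun C _ => by ring
  have hid : ∑ C ∈ Rᶜ.powerset, (#C)! * ((#R + #C) * N ^ (k - #C)) = N ^ (k + 1) := by
    rw [sum_powerset_apply_card (fun c => c ! * ((#R + c) * N ^ (k - c))), h, ← hN]
    simpa [mul_assoc] using sum_choose_mul_factorial_mul_pow #R k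
  have hne : ∑ C ∈ Rᶜ.powerset.erase ∅, (#C)! * (N * #(rootedMaps (R ∪ C))) =
      ∑ C ∈ Rᶜ.powerset.erase ∅, (#C)! * ((#R + #C) * N ^ (k - #C)) := by
    refine sum_congr rfl fun C hC => ?_
    obtain ⟨hCne, hCR⟩ := mem_erase.1 hC
    have hCR' : C ⊆ Rᶜ := mem_powerset.1 hCR
    have hcard : #(R ∪ C) = #R + #C :=
      card_union_of_disjoint (disjoint_left.2 fun x hxR hxC => mem_compl.1 (hCR' hxC) hxR)
    have hpos : 0 < #C := card_pos.2 (nonempty_iff_ne_empty.2 hCne)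
    have hCk : #C ≤ k := h ▸ card_le_card hCR'
    have hcompl : #(R ∪ C)ᶜ = k - #C := by
      have := card_le_univ (R ∪ C)
      rw [card_compl, ← hNdef]
      omega
    rw [ih (k - #C) (by omega) (R ∪ C) hcompl, hcard]
  rw [← add_sum_erase _ _ (empty_mem_powerset _), hne] at hrec
  rw [← add_sum_erase _ _ (empty_mem_powerset _)] at hid
  simp only [card_empty, Nat.factorial_zero, one_mul, union_empty, add_zero, Nat.sub_zero]
    at hrec hid
  omega

end Counting

namespace SimpleGraph

variable {V : Type*} {G : SimpleGraph V}

theorem isAcyclic_of_adj_of_rank_le (p : V → V) (ρ : V → ℕ)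
    (h : ∀ a b, G.Adj a b → ρ b ≤ ρ a → b = p a) : G.IsAcyclic := by
  classical
  intro u c hc
  obtain ⟨x, hx, hmax⟩ := c.support.toFinset.exists_max_image ρ ⟨u, by simp⟩
  rw [List.mem_toFinset] at hx
  set c' := c.rotate x hx
  have hc' : c'.IsCycle := hc.rotate hx
  have hle (y : V) (hy : y ∈ c'.support) : ρ y ≤ ρ x :=
    hmax y (List.mem_toFinset.2 ((c.mem_support_rotate_iff x hx).1 hy))
  refine hc'.snd_ne_penultimate ?_
  rw [h _ _ (c'.adj_snd hc'.not_nil) (hle _ (c'.getVert_mem_support 1)),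
    h _ _ (c'.adj_penultimate hc'.not_nil).symm (hle _ (c'.getVert_mem_support _))]

theorem Reachable.exists_adj_dist_lt {v r : V} (h : G.Reachable v r) (hne : v ≠ r) :
    ∃ w, G.Adj v w ∧ G.dist w r < G.dist v r := by
  obtain ⟨p, hp⟩ := h.exists_walk_length_eq_dist
  cases p with
  | nil => exact absurd rfl hne
  | cons hadj q =>
    rw [Walk.length_cons] at hp
    exact ⟨_, hadj, (dist_le q).trans_lt (by omega)⟩

theorem IsAcyclic.eq_of_adj_of_dist_lt (hG : G.IsAcyclic) {r a b w : V} (hr : G.Reachable a r)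
    (hb : G.Adj a b) (hw : G.Adj a w) (hdb : G.dist b r < G.dist a r)
    (hdw : G.dist w r < G.dist a r) : b = w := by
  classical
  obtain ⟨p, hp, hpl⟩ := hr.symm.exists_path_of_dist
  suffices key : ∀ x, G.Adj a x → G.dist x r < G.dist a r → x = p.penultimate from
    (key b hb hdb).trans (key w hw hdw).symm
  intro x hx hdx
  obtain ⟨q, hq, hql⟩ := (hr.symm.trans hx.reachable).exists_path_of_dist
  have ha : a ∉ q.support := fun ha => by
    have h1 := dist_le (q.takeUntil a ha)
    have h2 := q.length_takeUntil_le_length ha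
    rw [dist_comm] at h1 hql
    omega
  exact hG.eq_penultimate_of_adj_end hp hx
    (hG.mem_support_of_ne_mem_support_of_adj_of_isPath hp hq hx ha)

theorem ConnectedComponent.Represents.exists_root {s : Set V}
    (h : ConnectedComponent.Represents (G := G) s Set.univ) :
    ∃ root : V → V, ∀ v, root v ∈ s ∧ G.Reachable v (root v) ∧
      ∀ r ∈ s, G.Reachable v r → r = root v := by
  have hroot (v : V) : ∃ r ∈ s, G.Reachable v r := by
    obtain ⟨r, hr, hrv⟩ := h.2.2 (Set.mem_univ (G.connectedComponentMk v))
    exact ⟨r, hr, (ConnectedComponent.eq.1 hrv).symm⟩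
  choose root hrootR hroot using hroot
  exact ⟨root, fun v => ⟨hrootR v, hroot v, fun r hr hvr =>
    h.2.1 hr (hrootR v) (ConnectedComponent.eq.2 ((hroot v).symm.trans hvr).symm)⟩⟩

theorem ConnectedComponent.represents_univ_iff [Finite V] (R : Finset V) :
    ConnectedComponent.Represents (G := G) R Set.univ ↔
      Nat.card G.ConnectedComponent = #R ∧
        ∀ i ∈ R, ∀ j ∈ R, G.Reachable i j → i = j := by
  have hinj : Set.InjOn G.connectedComponentMk R ↔
      ∀ i ∈ R, ∀ j ∈ R, G.Reachable i j → i = j := by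
    simp [Set.InjOn, ConnectedComponent.eq]
  refine ⟨fun h => ⟨?_, hinj.1 h.injOn⟩, fun ⟨hcard, hR⟩ => ?_⟩
  · rw [← Set.ncard_univ, ← h.ncard_eq, Set.ncard_coe_finset]
  · have himage : G.connectedComponentMk '' R = Set.univ :=
      Set.eq_of_subset_of_ncard_le (Set.subset_univ _)
        (by rw [Set.ncard_univ, (hinj.2 hR).ncard_image, Set.ncard_coe_finset, hcard])
    exact ⟨Set.mapsTo_univ _ _, hinj.2 hR, himage.symm.subset⟩

end SimpleGraph

section Forests

open Function SimpleGraph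

variable {α : Type*}

def functionalGraph (f : α → α) : SimpleGraph α := SimpleGraph.fromRel fun a b => b = f a

theorem functionalGraph_adj {f : α → α} {a b : α} :
    (functionalGraph f).Adj a b ↔ a ≠ b ∧ (b = f a ∨ a = f b) :=
  fromRel_adj _ a b

theorem functionalGraph_reachable_iterate (f : α → α) (x : α) (n : ℕ) :
    (functionalGraph f).Reachable x (f^[n] x) := by
  induction n with
  | zero => rfl
  | succ n ih =>
    rw [iterate_succ_apply']
    refine ih.trans ?_
    by_cases h : f^[n] x = f (f^[n] x)
    · rw [← h]
    · exact (functionalGraph_adj.2 ⟨h, Or.inl rfl⟩).reachable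

variable [Fintype α]

def rootedForests (R : Finset α) : Finset (SimpleGraph α) :=
  {G | G.IsAcyclic ∧ ConnectedComponent.Represents (G := G) R Set.univ}

variable {R : Finset α} {f : α → α}

@[simp] theorem mem_rootedForests {G : SimpleGraph α} :
    G ∈ rootedForests R ↔ G.IsAcyclic ∧ ConnectedComponent.Represents (G := G) R Set.univ := by
  simp [rootedForests]

theorem iterate_card_mem_of_mem_rootedMaps (hf : f ∈ rootedMaps R) (x : α) :
    f^[Fintype.card α] x ∈ R :=
  (mem_rootedMaps.1 hf).2 (iterate_card_mem_periodicPts f x)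

theorem iterate_card_eq_of_reachable (hf : f ∈ rootedMaps R) {a b : α}
    (h : (functionalGraph f).Reachable a b) : f^[Fintype.card α] a = f^[Fintype.card α] b := by
  have hstep (x : α) : f^[Fintype.card α] (f x) = f^[Fintype.card α] x := by
    rw [← iterate_succ_apply, iterate_succ_apply',
      (mem_rootedMaps.1 hf).1 _ (iterate_card_mem_of_mem_rootedMaps hf x)]
  obtain ⟨p⟩ := h
  induction p with
  | nil => rfl
  | cons hadj _ ih =>
    rcases (functionalGraph_adj.1 hadj).2 with rfl | rfl
    · exact (hstep _).symm.trans ih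
    · exact (hstep _).trans ih

theorem functionalGraph_isAcyclic (hf : f ∈ rootedMaps R) : (functionalGraph f).IsAcyclic := by
  obtain ⟨hfix, hper⟩ := mem_rootedMaps.1 hf
  obtain ⟨ρ, hρ⟩ := exists_rank_of_periodicPts_subset hper
  refine isAcyclic_of_adj_of_rank_le f ρ fun a b hab hle => ?_
  obtain ⟨hne, rfl | rfl⟩ := functionalGraph_adj.1 hab
  · rfl
  · by_cases hb : b ∈ R
    · exact absurd (hfix b hb) hne
    · exact absurd (hρ b (by simpa using hb)) (not_lt.2 hle)

theorem functionalGraph_represents (hf : f ∈ rootedMaps R) :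
    ConnectedComponent.Represents (G := functionalGraph f) R Set.univ := by
  obtain ⟨hfix, -⟩ := mem_rootedMaps.1 hf
  refine ⟨Set.mapsTo_univ _ _, fun r hr r' hr' h => ?_, fun c _ => ?_⟩
  · have := iterate_card_eq_of_reachable hf (ConnectedComponent.eq.1 h)
    rwa [iterate_fixed (hfix r hr), iterate_fixed (hfix r' hr')] at this
  · induction c using ConnectedComponent.ind with
    | h v => exact ⟨_, iterate_card_mem_of_mem_rootedMaps hf v,
        ConnectedComponent.eq.2 (functionalGraph_reachable_iterate f v _).symm⟩

theorem functionalGraph_mem_rootedForests (hf : f ∈ rootedMaps R) :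
    functionalGraph f ∈ rootedForests R :=
  mem_rootedForests.2 ⟨functionalGraph_isAcyclic hf, functionalGraph_represents hf⟩

/- Where `f` and `g` differ at `y`, the edge `{y, f y}` of the common graph forces `g (f y) = y`,
so they differ at `f y` as well; but the `f`-orbit of `y` reaches `R`, where both are the
identity. -/
theorem functionalGraph_injOn : Set.InjOn functionalGraph (rootedMaps R : Set (α → α)) := by
  intro f hf g hg hfg
  obtain ⟨hffix, hfper⟩ := mem_rootedMaps.1 hf
  obtain ⟨hgfix, -⟩ := mem_rootedMaps.1 hg
  have hstep (y : α) (hy : f y ≠ g y) : f (f y) ≠ g (f y) := by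
    have hyR : y ∉ R := fun h => hy ((hffix y h).trans (hgfix y h).symm)
    have hfy : f y ≠ y := fun h => hyR (hfper (mk_mem_periodicPts one_pos h))
    have hadj : (functionalGraph g).Adj y (f y) :=
      hfg ▸ functionalGraph_adj.2 ⟨hfy.symm, Or.inl rfl⟩
    obtain ⟨-, h | h⟩ := functionalGraph_adj.1 hadj
    · exact absurd h hy
    · intro h2
      exact hyR (hfper (mk_mem_periodicPts two_pos (h2.trans h.symm)))
  by_contra hne
  obtain ⟨x, hx⟩ := Function.ne_iff.1 hne
  have hiter (n : ℕ) : f (f^[n] x) ≠ g (f^[n] x) := by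
    induction n with
    | zero => exact hx
    | succ n ih => rw [iterate_succ_apply']; exact hstep _ ih
  have hroot := iterate_card_mem_of_mem_rootedMaps hf x
  exact hiter _ ((hffix _ hroot).trans (hgfix _ hroot).symm)

theorem exists_mem_rootedMaps_functionalGraph_eq {G : SimpleGraph α}
    (hG : G ∈ rootedForests R) : ∃ f ∈ rootedMaps R, functionalGraph f = G := by
  obtain ⟨hacyc, hrep⟩ := mem_rootedForests.1 hG
  obtain ⟨root, hroot⟩ := hrep.exists_root
  have hroot_adj {a b : α} (h : G.Adj a b) : root a = root b :=
    ((hroot a).2.2 _ (hroot b).1 (h.reachable.trans (hroot b).2.1)).symm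
  have hparent (v : α) (hv : v ∉ R) :
      ∃ w, G.Adj v w ∧ G.dist w (root v) < G.dist v (root v) :=
    (hroot v).2.1.exists_adj_dist_lt fun h => hv (h ▸ (hroot v).1)
  choose! parent hadj hdist using hparent
  let f : α → α := fun v => if v ∈ R then v else parent v
  have hf : f ∈ rootedMaps R := by
    refine mem_rootedMaps.2 ⟨fun x hx => if_pos hx, ?_⟩
    refine periodicPts_subset_of_rank (fun x hx => by simp [f, Finset.mem_coe.1 hx])
      (fun v => G.dist v (root v)) fun x hx => ?_
    rw [Finset.mem_coe] at hx
    simp only [f, if_neg hx, ← hroot_adj (hadj x hx)]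
    exact hdist x hx
  have hparent_eq {a b : α} (hab : G.Adj a b) (hlt : G.dist b (root a) < G.dist a (root a)) :
      b = f a := by
    have ha : a ∉ R := fun ha => by simp [← (hroot a).2.2 a ha (Reachable.refl a)] at hlt
    simp only [f, if_neg ha]
    exact hacyc.eq_of_adj_of_dist_lt (hroot a).2.1 hab (hadj a ha) hlt (hdist a ha)
  have hle : functionalGraph f ≤ G := by
    have hadj_f (x : α) (hne : x ≠ f x) : G.Adj x (f x) := by
      by_cases hx : x ∈ R
      · simp [f, hx] at hne
      · simpa [f, hx] using hadj x hx
    rintro a b hab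
    obtain ⟨hne, rfl | rfl⟩ := functionalGraph_adj.1 hab
    · exact hadj_f a hne
    · exact (hadj_f b hne.symm).symm
  have hge : G ≤ functionalGraph f := by
    intro a b hab
    refine functionalGraph_adj.2 ⟨hab.ne, ?_⟩
    have hne := hacyc.dist_ne_of_adj hab (hroot a).2.1.symm
    rw [dist_comm, dist_comm (u := root a)] at hne
    rcases lt_or_gt_of_ne hne with h | h
    · rw [hroot_adj hab] at h
      exact Or.inr (hparent_eq hab.symm h)
    · exact Or.inl (hparent_eq hab h)
  exact ⟨f, hf, le_antisymm hle hge⟩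

theorem card_rootedForests (R : Finset α) : #(rootedForests R) = #(rootedMaps R) :=
  (card_bij (fun f _ => functionalGraph f) (fun _ hf => functionalGraph_mem_rootedForests hf)
    (fun _ hf _ hg => functionalGraph_injOn hf hg) fun _ hG => by
      obtain ⟨f, hf, rfl⟩ := exists_mem_rootedMaps_functionalGraph_eq hG
      exact ⟨f, hf, rfl⟩).symm

theorem card_mul_card_rootedForests [DecidableEq α] (R : Finset α) :
    Fintype.card α * #(rootedForests R) = #R * Fintype.card α ^ #Rᶜ := by
  rw [card_rootedForests, card_mul_card_rootedMaps]

end Forests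

theorem forestSet_eq_rootedForests {n t : ℕ} (htn : t ≤ n) :
    forestSet n t = rootedForests {i : Fin n | (i : ℕ) < t} := by
  ext G
  simp only [forestSet, mem_rootedForests, SimpleGraph.ConnectedComponent.represents_univ_iff,
    Fin.card_filter_val_lt, min_eq_right htn, mem_filter, mem_univ, true_and,
    Nat.card_eq_fintype_card]
  tauto

/-- generalized Cayley formula: the number of forests on `[n]`
with exactly `t` tree components in which the vertices `1, …, t` all lie in
different tree components equals `t · n^{n-t-1}`, for `1 ≤ t ≤ n`. -/
theorem stmt0 (n t : ℕ) (ht1 : 1 ≤ t) (htn : t ≤ n) :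
    ((forestSet n t).card : ℝ) = (t : ℝ) * (n : ℝ) ^ ((n : ℤ) - (t : ℤ) - 1) := by
  have hR : #{i : Fin n | (i : ℕ) < t} = t := by rw [Fin.card_filter_val_lt, min_eq_right htn]
  have hcount := card_mul_card_rootedForests {i : Fin n | (i : ℕ) < t}
  rw [← forestSet_eq_rootedForests htn, card_compl, Fintype.card_fin, hR] at hcount
  have hn : (n : ℝ) ≠ 0 := by exact_mod_cast (by omega : n ≠ 0)
  rw [show (n : ℤ) - t - 1 = ((n - t : ℕ) : ℤ) - 1 by push_cast [Nat.cast_sub htn]; ring,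
    zpow_sub_one₀ hn, zpow_natCast, ← mul_assoc, eq_mul_inv_iff_mul_eq₀ hn]
  exact_mod_cast (mul_comm _ _).trans hcount
end
end

section
/- For a Galton–Watson tree T with offspring distribution Poisson(1), the probability that T has exactly k vertices equals e^{−k} k^{k−1} / k!, for every positive integer k. -/
open scoped Classical BigOperators
open Finset Filter

noncomputable section

/-!
Encode a plane tree with `k` vertices by its Łukasiewicz word, the numbers of children of its
vertices in depth-first order. This is a bijection onto the words `d : Fin k → ℕ` with sum `k - 1`
satisfying `j ≤ ∑ i < j, d i` for all `j`, and the Poisson(`c`) weight of the tree is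
`e^{-ck} c^{k-1} ∏ i, 1 / (d i)!`. By the cycle lemma exactly one of the `k` rotations of a word
with sum `k - 1` is a Łukasiewicz word, so these words carry a `1 / k` share of the total weight
`∑ ∏ i, 1 / (d i)! = k^{k-1} / (k-1)!` of all words with sum `k - 1` (multinomial theorem).
-/

namespace List

variable {α : Type*} [LinearOrder α]

theorem lt_append_singleton (l : List α) (a : α) : l < l ++ [a] := by
  simpa using append_left_lt (l₁ := l) (nil_lt_cons a [])

theorem dropLast_lt {l : List α} (h : l ≠ []) : l.dropLast < l := by
  conv_rhs => rw [← dropLast_append_getLast h]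
  exact lt_append_singleton _ _

theorem append_cons_lt_append_singleton (l r : List α) {a b : α} (h : a < b) :
    l ++ a :: r < l ++ [b] :=
  append_left_lt (by simp [cons_lt_cons_iff, h])

end List

theorem childCount_eq_card_filter (T : Finset (List ℕ)) (l : List ℕ) :
    childCount T l = #(T.filter (fun y => y ≠ [] ∧ y.dropLast = l)) := by
  unfold childCount
  congr 1
  ext y
  simp only [mem_filter, and_congr_right_iff]
  intro _
  constructor
  · rintro ⟨i, rfl⟩
    simp
  · rintro ⟨hy, rfl⟩
    exact ⟨y.getLast hy, (List.dropLast_append_getLast hy).symm⟩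

theorem sum_childCount (T A : Finset (List ℕ)) :
    ∑ x ∈ A, childCount T x = #(T.filter (fun y => y ≠ [] ∧ y.dropLast ∈ A)) := by
  rw [card_eq_sum_card_fiberwise (f := List.dropLast) (fun y hy => (mem_filter.1 hy).2.2)]
  refine sum_congr rfl fun x hx => ?_
  rw [childCount_eq_card_filter, filter_filter]
  congr 1
  ext y
  simp only [mem_filter]
  constructor
  · rintro ⟨hyT, hy, rfl⟩
    exact ⟨hyT, ⟨hy, hx⟩, rfl⟩
  · rintro ⟨hyT, ⟨hy, -⟩, rfl⟩
    exact ⟨hyT, hy, rfl⟩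

namespace IsPlaneTree

variable {T : Finset (List ℕ)} {x : List ℕ}

theorem mem_of_append_mem (hT : IsPlaneTree T) {l r : List ℕ} (h : l ++ r ∈ T) : l ∈ T := by
  induction r using List.reverseRecOn generalizing l with
  | nil => simpa using h
  | append_singleton r i ih =>
    rw [← List.append_assoc] at h
    exact ih (hT.2 _ _ h).1

theorem mem_of_prefix (hT : IsPlaneTree T) {l m : List ℕ} (h : l <+: m) (hm : m ∈ T) : l ∈ T := by
  obtain ⟨r, rfl⟩ := h
  exact hT.mem_of_append_mem hm

theorem dropLast_mem (hT : IsPlaneTree T) {y : List ℕ} (hy : y ∈ T) : y.dropLast ∈ T :=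
  hT.mem_of_prefix (List.dropLast_prefix y) hy

theorem append_singleton_mem_iff (hT : IsPlaneTree T) (l : List ℕ) (j : ℕ) :
    l ++ [j] ∈ T ↔ j < childCount T l := by
  have hinj : Function.Injective (fun i : ℕ => l ++ [i]) := fun i i' h => by simpa using h
  have hdown : ∀ {i j : ℕ}, l ++ [i] ∈ T → j ≤ i → l ++ [j] ∈ T := fun hi hji =>
    hji.eq_or_lt.elim (· ▸ hi) ((hT.2 l _ hi).2 _)
  rw [childCount]
  constructor
  · intro hj
    have hsub : (range (j + 1)).image (fun i => l ++ [i]) ⊆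
        T.filter (fun x => ∃ i : ℕ, x = l ++ [i]) := by
      simp only [subset_iff, mem_image, mem_range, mem_filter]
      rintro _ ⟨i, hi, rfl⟩
      exact ⟨hdown hj (Nat.lt_succ_iff.1 hi), i, rfl⟩
    simpa [card_image_of_injective _ hinj] using card_le_card hsub
  · intro hj
    by_contra hjT
    have hsub : T.filter (fun x => ∃ i : ℕ, x = l ++ [i]) ⊆
        (range j).image (fun i => l ++ [i]) := by
      simp only [subset_iff, mem_image, mem_range, mem_filter]
      rintro _ ⟨hiT, i, rfl⟩
      exact ⟨i, lt_of_not_ge fun hji => hjT (hdown hiT hji), rfl⟩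
    have := card_le_card hsub
    rw [card_image_of_injective _ hinj, card_range] at this
    exact absurd hj (not_lt.2 this)

theorem childCount_eq_zero_of_notMem (hT : IsPlaneTree T) {l : List ℕ} (hl : l ∉ T) :
    childCount T l = 0 := by
  by_contra h
  exact hl (hT.2 l 0 ((hT.append_singleton_mem_iff l 0).2 (Nat.pos_of_ne_zero h))).1

theorem sum_childCount_eq_card_sub_one (hT : IsPlaneTree T) :
    ∑ x ∈ T, childCount T x = #T - 1 := by
  rw [sum_childCount, ← card_erase_of_mem hT.1]
  congr 1
  ext y
  simp only [mem_filter, mem_erase]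
  exact ⟨fun ⟨hy, hne, _⟩ => ⟨hne, hy⟩, fun ⟨hne, hy⟩ => ⟨hy, hne, hT.dropLast_mem hy⟩⟩

theorem filter_le_subset_children_filter_lt (hT : IsPlaneTree T) :
    T.filter (fun y => y ≠ [] ∧ y ≤ x) ⊆
      T.filter (fun y => y ≠ [] ∧ y.dropLast ∈ T.filter (· < x)) := by
  intro y hy
  obtain ⟨hyT, hne, hyx⟩ := mem_filter.1 hy
  exact mem_filter.2 ⟨hyT, hne, mem_filter.2
    ⟨hT.dropLast_mem hyT, (List.dropLast_lt hne).trans_le hyx⟩⟩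

theorem card_filter_ne_nil_le (hT : IsPlaneTree T) (hx : x ∈ T) :
    #(T.filter (fun y => y ≠ [] ∧ y ≤ x)) = #(T.filter (· < x)) := by
  have hle : T.filter (· ≤ x) = insert x (T.filter (· < x)) := by
    ext y
    simp only [mem_filter, mem_insert, le_iff_lt_or_eq]
    constructor
    · rintro ⟨hy, h | rfl⟩ <;> tauto
    · rintro (rfl | ⟨hy, h⟩) <;> tauto
  have hroot : ([] : List ℕ) ∈ T.filter (· ≤ x) :=
    mem_filter.2 ⟨hT.1, not_lt.1 (List.not_lt_nil x)⟩
  rw [← filter_filter, filter_ne', filter_erase, card_erase_of_mem hroot, hle,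
    card_insert_of_notMem (by simp), Nat.add_sub_cancel]

theorem card_filter_lt_le_sum_childCount (hT : IsPlaneTree T) (hx : x ∈ T) :
    #(T.filter (· < x)) ≤ ∑ y ∈ T.filter (· < x), childCount T y := by
  rw [sum_childCount, ← hT.card_filter_ne_nil_le hx]
  exact card_le_card hT.filter_le_subset_children_filter_lt

theorem append_singleton_le_of_sum_childCount_eq (hT : IsPlaneTree T) (hx : x ∈ T)
    (h : ∑ y ∈ T.filter (· < x), childCount T y = #(T.filter (· < x)))
    {w : List ℕ} {a : ℕ} (hwa : w ++ [a] ∈ T) (hw : w < x) : w ++ [a] ≤ x := by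
  rw [sum_childCount, ← hT.card_filter_ne_nil_le hx] at h
  have heq := eq_of_subset_of_card_le hT.filter_le_subset_children_filter_lt h.le
  have hw' : w ∈ T.filter (· < x) := mem_filter.2 ⟨hT.mem_of_append_mem hwa, hw⟩
  have hmem : w ++ [a] ∈ T.filter (fun y => y ≠ [] ∧ y.dropLast ∈ T.filter (· < x)) :=
    mem_filter.2 ⟨hwa, by simp, by simpa using hw'⟩
  rw [← heq] at hmem
  exact (mem_filter.1 hmem).2.2

theorem isPrefix_of_le (hT : IsPlaneTree T)
    (H : ∀ (w : List ℕ) (a : ℕ), w ++ [a] ∈ T → w < x → w ++ [a] ≤ x) {z : List ℕ}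
    (hz : z ∈ T) (hxz : x ≤ z) : x <+: z := by
  induction z using List.reverseRecOn with
  | nil => rw [le_antisymm hxz (not_lt.1 (List.not_lt_nil x))]
  | append_singleton w a ih =>
    rcases lt_or_ge w x with hw | hw
    · rw [le_antisymm (H w a hz hw) hxz]
    · exact (ih (hT.mem_of_append_mem hz) hw).trans (List.prefix_append w [a])

theorem lt_append_childCount (hT : IsPlaneTree T) (hx : x ∈ T)
    (h : ∑ y ∈ T.filter (· < x), childCount T y = #(T.filter (· < x))) :
    ∀ z ∈ T, z < x ++ [childCount T x] := by
  intro z hz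
  rcases lt_or_ge z x with hzx | hxz
  · exact hzx.trans (List.lt_append_singleton x _)
  obtain ⟨_ | ⟨a, r⟩, rfl⟩ :=
    hT.isPrefix_of_le (fun w a => hT.append_singleton_le_of_sum_childCount_eq hx h) hz hxz
  · simpa using List.lt_append_singleton x _
  · refine List.append_cons_lt_append_singleton x r ((hT.append_singleton_mem_iff x a).1 ?_)
    exact hT.mem_of_append_mem (r := r) (by simpa using hz)

theorem append_childCount_notMem (hT : IsPlaneTree T) (x : List ℕ) :
    x ++ [childCount T x] ∉ T := by
  rw [hT.append_singleton_mem_iff]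
  exact lt_irrefl _

theorem insert_append_childCount (hT : IsPlaneTree T) (hx : x ∈ T) :
    IsPlaneTree (insert (x ++ [childCount T x]) T) := by
  refine ⟨mem_insert_of_mem hT.1, fun l i hli => ?_⟩
  rcases mem_insert.1 hli with heq | hli
  · obtain ⟨rfl, rfl⟩ : l = x ∧ i = childCount T x := by simpa using heq
    exact ⟨mem_insert_of_mem hx, fun j hj =>
      mem_insert_of_mem ((hT.append_singleton_mem_iff l j).2 hj)⟩
  · exact ⟨mem_insert_of_mem (hT.2 l i hli).1,
      fun j hj => mem_insert_of_mem ((hT.2 l i hli).2 j hj)⟩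

theorem childCount_insert_append_childCount (hT : IsPlaneTree T) (y : List ℕ) :
    childCount (insert (x ++ [childCount T x]) T) y = childCount T y + if y = x then 1 else 0 := by
  have hnew := hT.append_childCount_notMem x
  generalize childCount T x = d at hnew ⊢
  unfold childCount
  rw [filter_insert]
  by_cases hyx : y = x
  · subst hyx
    rw [if_pos ⟨_, rfl⟩, if_pos rfl, card_insert_of_notMem fun h => hnew (mem_filter.1 h).1]
  · rw [if_neg, if_neg hyx, add_zero]
    rintro ⟨i, hi⟩
    exact hyx (List.append_inj' hi rfl).1.symm

end IsPlaneTree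

namespace Finset

variable {α : Type*} [LinearOrder α] {s : Finset α} {k : ℕ}

theorem orderEmbOfFin_insert_of_forall_lt [DecidableEq α] {a : α} (ha : ∀ b ∈ s, b < a) (h : #s = k)
    (h' : #(insert a s) = k + 1) :
    ⇑((insert a s).orderEmbOfFin h') = Fin.snoc (α := fun _ => α) (s.orderEmbOfFin h) a := by
  have hmono : StrictMono (Fin.snoc (α := fun _ => α) (s.orderEmbOfFin h) a) := by
    intro i j hij
    induction j using Fin.lastCases with
    | last =>
      obtain ⟨i, rfl⟩ := Fin.exists_castSucc_eq.2 hij.ne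
      simpa using ha _ (orderEmbOfFin_mem s h i)
    | cast j =>
      obtain ⟨i, rfl⟩ := Fin.exists_castSucc_eq.2 (hij.trans (Fin.castSucc_lt_last j)).ne
      simpa using (s.orderEmbOfFin h).strictMono (Fin.castSucc_lt_castSucc_iff.1 hij)
  refine (orderEmbOfFin_unique h' (fun i => ?_) hmono).symm
  induction i using Fin.lastCases with
  | last => simp
  | cast i => simp [orderEmbOfFin_mem]

variable [DecidableLT α]

theorem map_Iio_orderEmbOfFin (h : #s = k) (i : Fin k) :
    (Iio i).map (s.orderEmbOfFin h).toEmbedding = s.filter (· < s.orderEmbOfFin h i) := by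
  ext x
  simp only [mem_map, mem_Iio, mem_filter, RelEmbedding.coe_toEmbedding]
  constructor
  · rintro ⟨j, hj, rfl⟩
    exact ⟨orderEmbOfFin_mem s h j, (s.orderEmbOfFin h).lt_iff_lt.2 hj⟩
  · rintro ⟨hx, hlt⟩
    obtain ⟨j, rfl⟩ : x ∈ Set.range (s.orderEmbOfFin h) := by rwa [range_orderEmbOfFin]
    exact ⟨j, (s.orderEmbOfFin h).lt_iff_lt.1 hlt, rfl⟩

theorem card_filter_lt_orderEmbOfFin (h : #s = k) (i : Fin k) :
    #(s.filter (· < s.orderEmbOfFin h i)) = i := by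
  rw [← map_Iio_orderEmbOfFin, card_map, Fin.card_Iio]

theorem sum_filter_lt_orderEmbOfFin {M : Type*} [AddCommMonoid M] (h : #s = k) (i : Fin k)
    (f : α → M) :
    ∑ x ∈ s.filter (· < s.orderEmbOfFin h i), f x = ∑ j ∈ Iio i, f (s.orderEmbOfFin h j) := by
  rw [← map_Iio_orderEmbOfFin, sum_map]
  rfl

end Finset

namespace Fin

theorem sum_Iio_succ {M : Type*} [AddCommMonoid M] {n : ℕ} (f : Fin (n + 1) → M)
    (j : Fin n) : ∑ i ∈ Iio j.succ, f i = ∑ i ∈ Iio j.castSucc, f i + f j.castSucc := by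
  rw [sum_Iio_add_eq_sum_Iic]
  congr 1

open Fin.NatCast in
theorem sum_Iio_eq_sum_range {M : Type*} [AddCommMonoid M] {k : ℕ} [NeZero k]
    (f : Fin k → M) (j : Fin k) : ∑ i ∈ Iio j, f i = ∑ t ∈ range j, f (t : Fin k) := by
  rw [← Nat.Iio_eq_range, ← Fin.map_valEmbedding_Iio, sum_map]
  simp

end Fin

def IsLukasiewicz {k : ℕ} (c : Fin k → ℕ) : Prop :=
  ∀ j : Fin k, (j : ℕ) ≤ ∑ i ∈ Iio j, c i

/-- Lexicographic order on addresses is the depth-first order of the plane tree. -/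
def degSeq (T : Finset (List ℕ)) {k : ℕ} (h : #T = k) : Fin k → ℕ :=
  fun i => childCount T (T.orderEmbOfFin h i)

section DegreeSequence

variable {T T' : Finset (List ℕ)} {k : ℕ}

theorem sum_Iio_degSeq (h : #T = k) (j : Fin k) :
    ∑ i ∈ Iio j, degSeq T h i = ∑ y ∈ T.filter (· < T.orderEmbOfFin h j), childCount T y :=
  (sum_filter_lt_orderEmbOfFin h j _).symm

namespace IsPlaneTree

open scoped symmDiff

theorem sum_degSeq (hT : IsPlaneTree T) (h : #T = k) : ∑ i, degSeq T h i = k - 1 := by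
  calc ∑ i, degSeq T h i = ∑ x ∈ univ.map (T.orderEmbOfFin h).toEmbedding, childCount T x :=
        (sum_map _ _ _).symm
    _ = k - 1 := by rw [map_orderEmbOfFin_univ, hT.sum_childCount_eq_card_sub_one, h]

theorem isLukasiewicz_degSeq (hT : IsPlaneTree T) (h : #T = k) : IsLukasiewicz (degSeq T h) :=
  fun j => by
    rw [sum_Iio_degSeq, ← card_filter_lt_orderEmbOfFin h j]
    exact hT.card_filter_lt_le_sum_childCount (orderEmbOfFin_mem T h j)

/-- A plane tree is determined by its degree sequence: the parent of the first vertex of `T`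
missing from `T'` has the same position, hence the same number of children, in both trees. -/
theorem mem_of_degSeq_eq (hT : IsPlaneTree T) (hT' : IsPlaneTree T') (h : #T = k)
    (h' : #T' = k) (hd : degSeq T h = degSeq T' h') {y : List ℕ} (hy : y ∈ T)
    (hbelow : ∀ z < y, z ∈ T ↔ z ∈ T') : y ∈ T' := by
  rcases eq_or_ne y [] with rfl | hne
  · exact hT'.1
  have hw : y.dropLast < y := List.dropLast_lt hne
  have hfilter : T.filter (· < y.dropLast) = T'.filter (· < y.dropLast) := by
    ext z
    simp only [mem_filter]
    exact and_congr_left fun hz => hbelow z (hz.trans hw)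
  obtain ⟨j, hj⟩ : y.dropLast ∈ Set.range (T.orderEmbOfFin h) := by
    rw [range_orderEmbOfFin]
    exact hT.dropLast_mem hy
  obtain ⟨j', hj'⟩ : y.dropLast ∈ Set.range (T'.orderEmbOfFin h') := by
    rw [range_orderEmbOfFin]
    exact (hbelow _ hw).1 (hT.dropLast_mem hy)
  obtain rfl : j = j' := Fin.ext <| by
    rw [← card_filter_lt_orderEmbOfFin h j, ← card_filter_lt_orderEmbOfFin h' j', hj, hj',
      hfilter]
  have hcount : childCount T y.dropLast = childCount T' y.dropLast := by
    simpa [degSeq, hj, hj'] using congrFun hd j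
  rw [← List.dropLast_append_getLast hne] at hy ⊢
  rwa [hT'.append_singleton_mem_iff, ← hcount, ← hT.append_singleton_mem_iff]

theorem eq_of_degSeq_eq (hT : IsPlaneTree T) (hT' : IsPlaneTree T') (h : #T = k)
    (h' : #T' = k) (hd : degSeq T h = degSeq T' h') : T = T' := by
  by_contra hne
  have hne' : (T ∆ T').Nonempty := symmDiff_nonempty.2 hne
  have hmin := (T ∆ T').min'_mem hne'
  have hbelow : ∀ z < (T ∆ T').min' hne', z ∈ T ↔ z ∈ T' := fun z hz => by
    by_contra hzT
    exact not_le.2 hz ((T ∆ T').min'_le z (mem_symmDiff.2 (by tauto)))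
  rcases mem_symmDiff.1 hmin with ⟨hy, hy'⟩ | ⟨hy', hy⟩
  · exact hy' (hT.mem_of_degSeq_eq hT' h h' hd hy hbelow)
  · exact hy (hT'.mem_of_degSeq_eq hT h' h hd.symm hy' fun z hz => (hbelow z hz).symm)

theorem degSeq_insert_append_childCount (hT : IsPlaneTree T) (h : #T = k) (p : Fin k)
    (hp : ∑ i ∈ Iio p, degSeq T h i = p)
    (h' : #(insert (T.orderEmbOfFin h p ++ [childCount T (T.orderEmbOfFin h p)]) T) = k + 1) :
    degSeq _ h' = Fin.snoc (α := fun _ => ℕ) (degSeq T h + Pi.single p 1) 0 := by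
  have hx := orderEmbOfFin_mem T h p
  have hlt := hT.lt_append_childCount hx <| by
    rwa [sum_filter_lt_orderEmbOfFin, card_filter_lt_orderEmbOfFin]
  have he := orderEmbOfFin_insert_of_forall_lt hlt h h'
  funext i
  induction i using Fin.lastCases with
  | last =>
    simp only [degSeq, he, Fin.snoc_last, hT.childCount_insert_append_childCount,
      hT.childCount_eq_zero_of_notMem (hT.append_childCount_notMem _)]
    simp
  | cast i =>
    simp only [degSeq, he, Fin.snoc_castSucc, hT.childCount_insert_append_childCount,
      Pi.add_apply, Pi.single_apply, (T.orderEmbOfFin h).injective.eq_iff]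

end IsPlaneTree

end DegreeSequence

/-- `p` is the last time before the end at which the walk `j ↦ ∑ i < j, c i - j` is at zero. -/
theorem IsLukasiewicz.exists_last_zero {n : ℕ} {c : Fin (n + 2) → ℕ} (hc : IsLukasiewicz c) :
    ∃ p : Fin (n + 1), ∑ i ∈ Iio p.castSucc, c i = p ∧ 1 ≤ c p.castSucc ∧
      ∀ j : Fin (n + 1), p < j → (j : ℕ) < ∑ i ∈ Iio j.castSucc, c i := by
  obtain ⟨p, hp, hmax⟩ := (univ.filter fun j : Fin (n + 1) =>
    ∑ i ∈ Iio j.castSucc, c i = j).exists_max_image id ⟨0, by simp⟩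
  simp only [mem_filter, mem_univ, true_and, id] at hp hmax
  refine ⟨p, hp, ?_, fun j hpj =>
    (hc j.castSucc).lt_of_ne fun h => absurd (hmax j h.symm) (not_le.2 hpj)⟩
  have := hc p.succ
  rw [Fin.sum_Iio_succ, hp, Fin.val_succ] at this
  omega

/-- A Łukasiewicz word of a tree with `n + 2` vertices ends with a leaf, whose parent is the
vertex `p` of `exists_last_zero`. -/
theorem IsLukasiewicz.exists_eq_snoc {n : ℕ} {c : Fin (n + 2) → ℕ} (hc : IsLukasiewicz c)
    (hsum : ∑ i, c i = n + 1) :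
    ∃ (c' : Fin (n + 1) → ℕ) (p : Fin (n + 1)), IsLukasiewicz c' ∧ ∑ i, c' i = n ∧
      ∑ i ∈ Iio p, c' i = p ∧ c = Fin.snoc (c' + Pi.single p 1) 0 := by
  have hlast : ∑ i, Fin.init c i = n + 1 ∧ c (Fin.last _) = 0 := by
    have := hc (Fin.last _)
    rw [Fin.sum_univ_castSucc] at hsum
    rw [Fin.Iio_last_eq_map, sum_map] at this
    simp only [Fin.val_last, Fin.coe_castSuccEmb] at this
    exact ⟨by simp only [Fin.init]; omega, by omega⟩
  obtain ⟨p, hp, hcp, hgt⟩ := hc.exists_last_zero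
  set c' := Fin.init c - Pi.single p 1
  have hdecomp : Fin.init c = c' + Pi.single p 1 := by
    funext i
    by_cases hi : i = p
    · subst hi
      simp [c', Fin.init]
      omega
    · simp [c', hi]
  have hsum' : ∀ s : Finset (Fin (n + 1)),
      ∑ i ∈ s, Fin.init c i = ∑ i ∈ s, c' i + if p ∈ s then 1 else 0 := fun s => by
    rw [hdecomp, ← sum_pi_single' p 1 s, ← sum_add_distrib]
    rfl
  have hIio : ∀ j, ∑ i ∈ Iio j, c' i + (if p < j then 1 else 0) = ∑ i ∈ Iio j.castSucc, c i :=
    fun j => by simpa [Fin.sum_Iio_castSucc, Fin.init] using (hsum' (Iio j)).symm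
  refine ⟨c', p, fun j => ?_, ?_, ?_, ?_⟩
  · have h1 := hIio j
    have h2 : (j : ℕ) ≤ ∑ i ∈ Iio j.castSucc, c i := hc j.castSucc
    by_cases hpj : p < j
    · rw [if_pos hpj] at h1
      have := hgt j hpj
      omega
    · rw [if_neg hpj] at h1
      omega
  · have := hsum' univ
    simp only [mem_univ, if_true] at this
    omega
  · simpa [hp] using hIio p
  · rw [← hdecomp, ← hlast.2]
    exact (Fin.snoc_init_self c).symm

theorem exists_isPlaneTree_degSeq_eq {n : ℕ} (c : Fin (n + 1) → ℕ) (hc : IsLukasiewicz c)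
    (hsum : ∑ i, c i = n) :
    ∃ (T : Finset (List ℕ)) (h : #T = n + 1), IsPlaneTree T ∧ degSeq T h = c := by
  induction n with
  | zero =>
    refine ⟨{[]}, card_singleton _, ⟨mem_singleton_self _, fun l i h => by simp at h⟩, ?_⟩
    funext i
    rw [Fin.fin_one_eq_zero i, show c 0 = 0 by simpa using hsum]
    simp [degSeq, childCount, filter_singleton]
  | succ n ih =>
    obtain ⟨c', p, hc', hsum', hp, rfl⟩ := hc.exists_eq_snoc hsum
    obtain ⟨T, h, hT, rfl⟩ := ih c' hc' hsum'
    have h' := card_insert_of_notMem (hT.append_childCount_notMem (T.orderEmbOfFin h p))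
    rw [h] at h'
    exact ⟨_, h', hT.insert_append_childCount (orderEmbOfFin_mem T h p),
      hT.degSeq_insert_append_childCount h p hp h'⟩

/-- The cycle lemma, for the walk of partial sums. -/
theorem existsUnique_forall_le_add {g : ℕ → ℤ} {k : ℕ} [NeZero k]
    (hg : ∀ n, g (n + k) = g n - 1) : ∃! r : Fin k, ∀ m < k, g r ≤ g (r + m) := by
  have hlt : ∀ r r' : Fin k, (∀ m < k, g r ≤ g (r + m)) → (∀ m < k, g r' ≤ g (r' + m)) →
      ¬ r < r' := fun r r' hr hr' hrr' => by
    have h1 := hr (r' - r) (by omega)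
    have h2 := hr' (r + k - r') (by omega)
    rw [Nat.add_sub_cancel' hrr'.le] at h1
    rw [Nat.add_sub_cancel' (by omega), hg] at h2
    omega
  obtain ⟨r₀, hr₀, hmin⟩ := (range k).exists_min_image g (nonempty_range_iff.2 (NeZero.ne k))
  have hex : ∃ j, g j ≤ g r₀ := ⟨r₀, le_rfl⟩
  have hrk : Nat.find hex < k := (Nat.find_min' hex le_rfl).trans_lt (mem_range.1 hr₀)
  have hgood : ∀ m < k, g (Nat.find hex) ≤ g (Nat.find hex + m) := fun m hm => by
    rcases lt_or_ge (Nat.find hex + m) k with h | h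
    · exact (Nat.find_spec hex).trans (hmin _ (mem_range.2 h))
    · -- the first minimum lies strictly below all earlier values, hence weakly below them one
      -- period later
      have hj := Nat.find_min hex (show Nat.find hex + m - k < Nat.find hex by omega)
      have hper := hg (Nat.find hex + m - k)
      rw [Nat.sub_add_cancel h] at hper
      have := Nat.find_spec hex
      omega
  refine ⟨⟨Nat.find hex, hrk⟩, hgood, fun r hr => le_antisymm ?_ ?_⟩
  · exact not_lt.1 (hlt ⟨Nat.find hex, hrk⟩ r hgood hr)
  · exact not_lt.1 (hlt r ⟨Nat.find hex, hrk⟩ hr hgood)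

open Fin.NatCast in
theorem existsUnique_isLukasiewicz_rotate {k : ℕ} [NeZero k] (c : Fin k → ℕ)
    (hc : ∑ i, c i = k - 1) : ∃! r : Fin k, IsLukasiewicz (fun i => c (i + r)) := by
  set S : ℕ → ℕ := fun n => ∑ t ∈ range n, c (t : Fin k)
  have hshift : ∀ n m : ℕ, S (n + m) = S n + ∑ t ∈ range m, c ((t : Fin k) + n) := fun n m => by
    simp only [S, sum_range_add]
    congr 1
    refine sum_congr rfl fun t _ => ?_
    rw [Nat.cast_add, add_comm]
  have hperiod : ∀ n, S (n + k) = S n + (k - 1) := fun n => by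
    rw [hshift, ← hc, ← Fin.sum_univ_eq_sum_range (fun t => c ((t : Fin k) + n))]
    simp only [Fin.cast_val_eq_self]
    exact congrArg _ (Equiv.sum_comp (Equiv.addRight (n : Fin k)) c)
  have hrot : ∀ r : Fin k, IsLukasiewicz (fun i => c (i + r)) ↔
      ∀ m < k, (S r : ℤ) - r ≤ S (r + m) - (r + m : ℕ) := fun r => by
    simp only [IsLukasiewicz, Fin.sum_Iio_eq_sum_range, Fin.forall_iff, hshift,
      Fin.cast_val_eq_self]
    refine forall₂_congr fun m _ => ?_
    simp only [Nat.cast_add]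
    omega
  simp only [hrot]
  exact existsUnique_forall_le_add (g := fun n => (S n : ℤ) - n) fun n => by
    rw [hperiod]
    push_cast [Nat.one_le_iff_ne_zero.2 (NeZero.ne k)]
    ring

theorem Finset.sum_eq_card_nsmul_sum_filter {ι α M : Type*} [Fintype ι] [AddCommMonoid M]
    (s : Finset α) (σ : ι → Equiv.Perm α) (hs : ∀ i a, σ i a ∈ s ↔ a ∈ s) (f : α → M)
    (hf : ∀ i a, f (σ i a) = f a) (P : α → Prop) [DecidablePred P]
    (hP : ∀ a ∈ s, ∃! i, P (σ i a)) :
    ∑ a ∈ s, f a = Fintype.card ι • ∑ a ∈ s.filter P, f a := by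
  calc ∑ a ∈ s, f a = ∑ a ∈ s, ∑ i, if P (σ i a) then f (σ i a) else 0 := by
        refine sum_congr rfl fun a ha => ?_
        obtain ⟨i, hi, huniq⟩ := hP a ha
        have : univ.filter (fun j => P (σ j a)) = {i} := by
          ext j
          simpa using ⟨huniq j, fun h => h ▸ hi⟩
        rw [← sum_filter, this, sum_singleton, hf]
    _ = ∑ i : ι, ∑ a ∈ s, if P a then f a else 0 := by
        rw [sum_comm]
        exact sum_congr rfl fun i _ => sum_equiv (σ i) (fun a => (hs i a).symm) fun _ _ => rfl
    _ = Fintype.card ι • ∑ a ∈ s.filter P, f a := by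
        rw [sum_const, card_univ, sum_filter]

theorem sum_piAntidiag_prod_inv_factorial (ι : Type*) [Fintype ι] [DecidableEq ι] (n : ℕ) :
    ∑ c ∈ piAntidiag (univ : Finset ι) n, ∏ i, ((c i).factorial : ℝ)⁻¹ =
      (Fintype.card ι : ℝ) ^ n / n.factorial := by
  have hmultinomial := sum_pow_eq_sum_piAntidiag (univ : Finset ι) (fun _ => (1 : ℝ)) n
  simp only [sum_const, card_univ, nsmul_eq_mul, mul_one, one_pow, prod_const_one] at hmultinomial
  rw [hmultinomial, sum_div]
  refine sum_congr rfl fun c hc => ?_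
  have hspec := Nat.multinomial_spec univ c
  rw [(mem_piAntidiag.1 hc).1] at hspec
  rw [eq_div_iff (by positivity), ← hspec, Nat.cast_mul, Nat.cast_prod, prod_inv_distrib]
  field_simp

theorem sum_isLukasiewicz_prod_inv_factorial {k : ℕ} (hk : 1 ≤ k) :
    ∑ c ∈ (piAntidiag univ (k - 1)).filter (IsLukasiewicz (k := k)),
      ∏ i, ((c i).factorial : ℝ)⁻¹ = (k : ℝ) ^ (k - 1) / k.factorial := by
  have : NeZero k := ⟨by omega⟩
  let rotate (r : Fin k) : Equiv.Perm (Fin k → ℕ) := (Equiv.addRight r).symm.arrowCongr (.refl ℕ)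
  have hrotate : ∀ r c, rotate r c = fun i => c (i + r) := fun _ _ => rfl
  have hrot := sum_eq_card_nsmul_sum_filter (piAntidiag univ (k - 1)) rotate
    (fun r c => by
      simp [hrotate, mem_piAntidiag, Fintype.sum_equiv (Equiv.addRight r) (fun i => c (i + r)) c
        fun _ => rfl])
    (fun c => ∏ i, ((c i).factorial : ℝ)⁻¹)
    (fun r c => by
      simp only [hrotate]
      exact Equiv.prod_comp (Equiv.addRight r) fun i => ((c i).factorial : ℝ)⁻¹)
    IsLukasiewicz
    (fun c hc => by
      simpa [hrotate] using existsUnique_isLukasiewicz_rotate c (mem_piAntidiag.1 hc).1)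
  rw [sum_piAntidiag_prod_inv_factorial, Fintype.card_fin, nsmul_eq_mul] at hrot
  obtain ⟨n, rfl⟩ : ∃ n, k = n + 1 := ⟨k - 1, by omega⟩
  rw [Nat.add_sub_cancel] at hrot ⊢
  rw [Nat.factorial_succ, Nat.cast_mul, mul_comm, ← div_div, hrot,
    mul_div_cancel_left₀ _ (by positivity)]

theorem IsPlaneTree.gwWeight_eq {T : Finset (List ℕ)} {k : ℕ} (hT : IsPlaneTree T)
    (h : #T = k) (c : ℝ) :
    gwWeight c T = Real.exp (-(c * k)) * c ^ (k - 1) * ∏ i, ((degSeq T h i).factorial : ℝ)⁻¹ := by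
  calc gwWeight c T
      = ∏ l ∈ univ.map (T.orderEmbOfFin h).toEmbedding, poissonPMF c (childCount T l) := by
        rw [map_orderEmbOfFin_univ, gwWeight]
    _ = ∏ i, (Real.exp (-c) * c ^ degSeq T h i * ((degSeq T h i).factorial : ℝ)⁻¹) := by
        rw [prod_map]
        rfl
    _ = _ := by
        rw [prod_mul_distrib, prod_mul_distrib, prod_const, prod_pow_eq_pow_sum, hT.sum_degSeq,
          card_univ, Fintype.card_fin, ← Real.exp_nat_mul]
        ring_nf

def planeTreeEquivLukasiewicz {k : ℕ} (hk : 1 ≤ k) :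
    {T : Finset (List ℕ) // IsPlaneTree T ∧ #T = k} ≃
      (piAntidiag univ (k - 1)).filter (IsLukasiewicz (k := k)) :=
  Equiv.ofBijective
    (fun T => ⟨degSeq T.1 T.2.2, mem_filter.2 ⟨mem_piAntidiag.2
      ⟨T.2.1.sum_degSeq T.2.2, fun i _ => mem_univ i⟩, T.2.1.isLukasiewicz_degSeq T.2.2⟩⟩)
    ⟨fun T T' hTT' => Subtype.ext <|
      T.2.1.eq_of_degSeq_eq T'.2.1 T.2.2 T'.2.2 (congrArg Subtype.val hTT'), fun c => by
      obtain ⟨hc, hluk⟩ := mem_filter.1 c.2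
      obtain ⟨n, rfl⟩ : ∃ n, k = n + 1 := ⟨k - 1, by omega⟩
      obtain ⟨T, h, hT, hdeg⟩ := exists_isPlaneTree_degSeq_eq c.1 hluk (mem_piAntidiag.1 hc).1
      exact ⟨⟨T, hT, h⟩, Subtype.ext hdeg⟩⟩

theorem gwSizeProb_eq (c : ℝ) {k : ℕ} (hk : 1 ≤ k) :
    gwSizeProb c k = Real.exp (-(c * k)) * c ^ (k - 1) * ((k : ℝ) ^ (k - 1) / k.factorial) := by
  let W (d : Fin k → ℕ) : ℝ := Real.exp (-(c * k)) * c ^ (k - 1) * ∏ i, ((d i).factorial : ℝ)⁻¹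
  calc gwSizeProb c k = ∑' T, W (planeTreeEquivLukasiewicz hk T) :=
        tsum_congr fun T => T.2.1.gwWeight_eq T.2.2 c
    _ = ∑ d ∈ (piAntidiag univ (k - 1)).filter IsLukasiewicz, W d := by
        rw [Equiv.tsum_eq (planeTreeEquivLukasiewicz hk) (fun d => W d), Finset.tsum_subtype]
    _ = _ := by rw [← mul_sum, sum_isLukasiewicz_prod_inv_factorial hk]

/-- for the Galton--Watson tree with offspring distribution Poisson(1),
the probability of having exactly `k` vertices is `e^{-k} k^{k-1} / k!`. -/
theorem stmt1 (k : ℕ) (hk : 1 ≤ k) :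
    gwSizeProb 1 k = Real.exp (-(k : ℝ)) * (k : ℝ) ^ (k - 1) / (Nat.factorial k) := by
  rw [gwSizeProb_eq 1 hk, one_mul, one_pow, mul_one, mul_div_assoc]
end
end

section
/- Let K(n) be kernels (multigraphs with minimum degree at least 3), k(n) ∈ ℕ, e(n) ∈ E(K), and let C = C(K,k) be a core chosen uniformly at random from all cores with kernel K and |V(K)| + k vertices (equivalently, a uniformly random subdivision of K by k additional vertices). If e(K) = o(k), then for every fixed j ∈ ℕ₀, P(the number of subdivision vertices placed on e is at most j) = o(1); that is, with high probability the subdivision number of e tends to infinity. -/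
open scoped Classical BigOperators
open Finset Filter

noncomputable section

/-- The labelled subdivisions of a multigraph with edge set `Fin ε` by `k` vertices:
each of the `k` vertices is placed on an edge at a position, injectively, and the
positions on each edge form an initial segment. -/
def subdivSet (ε k : ℕ) : Finset (Fin k → Fin ε × Fin k) :=
  univ.filter (fun σ => Function.Injective σ ∧
    ∀ (i : Fin k) (j : ℕ), j < ((σ i).2 : ℕ) →
      ∃ i', (σ i').1 = (σ i).1 ∧ ((σ i').2 : ℕ) = j)

/-- The subdivision number of an edge: the number of subdivision vertices placed on it. -/
def subCount {ε k : ℕ} (σ : Fin k → Fin ε × Fin k) (e : Fin ε) : ℕ :=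
  (univ.filter (fun i => (σ i).1 = e)).card

/-!
Let `A m` be the set of subdivisions with exactly `m` vertices on the edge `e₀`. Take one of the
`k - m` vertices not on `e₀`, move it to the end of `e₀`, and let the last vertex of its old edge
fill the gap. The result lies in `A (m + 1)`, and together with the vacated slot (one of at most
`k + ε` slots) it determines the original pair, so `(k - m) #A m ≤ (k + ε) #A (m + 1)`. Iterating
this up to `M = min (√k) (k / ε)`, which tends to infinity when `ε = o(k)`, bounds every `#A m`
with `m ≤ j` by `e⁴` times each of `#A (j + 1), …, #A M`. Hence the probability of at most `j`
vertices on `e₀` is at most `(j + 1) e⁴ / (M - j) → 0`.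
-/

open Function

section Subdivision

variable {ε k : ℕ}

lemma sum_subCount (σ : Fin k → Fin ε × Fin k) : ∑ e, subCount σ e = k := by
  simpa [subCount] using (card_eq_sum_card_fiberwise
    (f := fun i => (σ i).1) (s := univ) (t := univ) fun _ _ => mem_univ _).symm

lemma card_image_snd_filter {σ : Fin k → Fin ε × Fin k} (hσ : Injective σ) (e : Fin ε) :
    #(({i | (σ i).1 = e} : Finset _).image fun i => ((σ i).2 : ℕ)) = subCount σ e :=
  card_image_of_injOn fun _ ha _ hb hab => hσ <| Prod.ext
    ((mem_filter.1 ha).2.trans (mem_filter.1 hb).2.symm) (Fin.ext hab)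

lemma snd_lt_subCount {σ : Fin k → Fin ε × Fin k} (hσ : σ ∈ subdivSet ε k) (i : Fin k) :
    ((σ i).2 : ℕ) < subCount σ (σ i).1 := by
  obtain ⟨hinj, hseg⟩ := (mem_filter.1 hσ).2
  have hsub : range ((σ i).2 + 1) ⊆
      ({i' | (σ i').1 = (σ i).1} : Finset _).image fun i' => ((σ i').2 : ℕ) := by
    intro r hr
    rcases (Nat.lt_succ_iff.1 (mem_range.1 hr)).lt_or_eq with hlt | rfl
    · obtain ⟨i', h1, h2⟩ := hseg i r hlt
      exact mem_image.2 ⟨i', by simpa using h1, h2⟩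
    · exact mem_image.2 ⟨i, by simp, rfl⟩
  have := card_le_card hsub
  rw [card_range, card_image_snd_filter hinj] at this
  omega

lemma image_snd_filter_eq_range {σ : Fin k → Fin ε × Fin k} (hinj : Injective σ)
    (hlt : ∀ i, ((σ i).2 : ℕ) < subCount σ (σ i).1) (e : Fin ε) :
    ({i | (σ i).1 = e} : Finset _).image (fun i => ((σ i).2 : ℕ)) = range (subCount σ e) :=
  eq_of_subset_of_card_le
    (fun p hp => by
      obtain ⟨i, hi, rfl⟩ := mem_image.1 hp
      exact mem_range.2 ((mem_filter.1 hi).2 ▸ hlt i))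
    (by rw [card_range, card_image_snd_filter hinj])

lemma mem_subdivSet_iff {σ : Fin k → Fin ε × Fin k} :
    σ ∈ subdivSet ε k ↔ Injective σ ∧ ∀ i, ((σ i).2 : ℕ) < subCount σ (σ i).1 := by
  refine ⟨fun hσ => ⟨(mem_filter.1 hσ).2.1, snd_lt_subCount hσ⟩,
    fun ⟨hinj, hlt⟩ => mem_filter.2 ⟨mem_univ _, hinj, fun i r hr => ?_⟩⟩
  have : r ∈ range (subCount σ (σ i).1) := mem_range.2 (hr.trans (hlt i))
  rw [← image_snd_filter_eq_range hinj hlt] at this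
  simpa using this

lemma exists_snd_eq {σ : Fin k → Fin ε × Fin k} (hσ : σ ∈ subdivSet ε k) {e : Fin ε} {p : ℕ}
    (hp : p < subCount σ e) : ∃ i, (σ i).1 = e ∧ ((σ i).2 : ℕ) = p := by
  obtain ⟨hinj, hlt⟩ := mem_subdivSet_iff.1 hσ
  have : p ∈ range (subCount σ e) := mem_range.2 hp
  rw [← image_snd_filter_eq_range hinj hlt] at this
  simpa using this

lemma subCount_lt {σ : Fin k → Fin ε × Fin k} {i₀ : Fin k} {e : Fin ε} (h : (σ i₀).1 ≠ e) :
    subCount σ e < k := by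
  simpa [subCount] using card_lt_card (filter_ssubset.2 ⟨i₀, mem_univ _, h⟩)

lemma subCount_comp_perm (σ : Fin k → Fin ε × Fin k) (π : Equiv.Perm (Fin k)) (e : Fin ε) :
    subCount (σ ∘ π) e = subCount σ e := by
  simp only [subCount, card_filter]
  exact Equiv.sum_comp π fun i => if (σ i).1 = e then 1 else 0

lemma comp_perm_mem_subdivSet {σ : Fin k → Fin ε × Fin k} (hσ : σ ∈ subdivSet ε k)
    (π : Equiv.Perm (Fin k)) : σ ∘ π ∈ subdivSet ε k := by
  obtain ⟨hinj, hlt⟩ := mem_subdivSet_iff.1 hσ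
  exact mem_subdivSet_iff.2
    ⟨hinj.comp π.injective, fun i => (subCount_comp_perm σ π _).symm ▸ hlt (π i)⟩

lemma subCount_update_add (σ : Fin k → Fin ε × Fin k) (i₀ : Fin k) (v : Fin ε × Fin k)
    (e : Fin ε) :
    subCount (update σ i₀ v) e + (if (σ i₀).1 = e then 1 else 0) =
      subCount σ e + (if v.1 = e then 1 else 0) := by
  simp only [subCount, card_filter]
  rw [← add_sum_erase _ _ (mem_univ i₀), ← add_sum_erase _ _ (mem_univ i₀), update_self,
    sum_congr rfl fun i hi => by rw [update_of_ne (ne_of_mem_erase hi)]]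
  ring

lemma update_last_mem_subdivSet {σ : Fin k → Fin ε × Fin k} {i₀ : Fin k} {e₀ : Fin ε} {p : Fin k}
    (hσ : σ ∈ subdivSet ε k) (hlast : ((σ i₀).2 : ℕ) + 1 = subCount σ (σ i₀).1)
    (hne : (σ i₀).1 ≠ e₀) (hp : (p : ℕ) = subCount σ e₀) :
    update σ i₀ (e₀, p) ∈ subdivSet ε k := by
  obtain ⟨hinj, hlt⟩ := mem_subdivSet_iff.1 hσ
  have hfree : ∀ i, σ i ≠ (e₀, p) := fun i h => by simpa [h, hp] using hlt i
  refine mem_subdivSet_iff.2 ⟨fun a b hab => ?_, fun i => ?_⟩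
  · simp only [update_apply] at hab
    split_ifs at hab with ha hb hb
    · exact ha.trans hb.symm
    · exact absurd hab.symm (hfree b)
    · exact absurd hab (hfree a)
    · exact hinj hab
  have hcount := subCount_update_add σ i₀ (e₀, p)
  rcases eq_or_ne i i₀ with rfl | hi
  · have := hcount e₀
    simp only [hne, ↓reduceIte, add_zero] at this
    simp [this, hp]
  · rw [update_of_ne hi]
    have h := hcount (σ i).1
    have := hlt i
    split_ifs at h with he₁ he₀
    · exact absurd (he₁.trans he₀.symm) hne
    · have hsnd : ((σ i).2 : ℕ) ≠ (σ i₀).2 := fun h' => hi (hinj (Prod.ext he₁.symm (Fin.ext h')))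
      rw [← he₁] at this h ⊢
      omega
    · omega
    · omega

/-- Composing with the swap hands the slot of `i₀` to the last vertex `ℓ` of its edge, so that
`i₀` can move to the new last slot `(e₀, p)` of `e₀` without leaving a gap. -/
def IsTransfer (e₀ : Fin ε) (σ : Fin k → Fin ε × Fin k) (i₀ : Fin k)
    (τ : Fin k → Fin ε × Fin k) : Prop :=
  ∃ ℓ p : Fin k, (σ ℓ).1 = (σ i₀).1 ∧ ((σ ℓ).2 : ℕ) + 1 = subCount σ (σ i₀).1 ∧
    (p : ℕ) = subCount σ e₀ ∧ τ = update (σ ∘ Equiv.swap i₀ ℓ) i₀ (e₀, p)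

lemma exists_isTransfer {σ : Fin k → Fin ε × Fin k} {i₀ : Fin k} {e₀ : Fin ε}
    (hσ : σ ∈ subdivSet ε k) (hne : (σ i₀).1 ≠ e₀) :
    ∃ τ ∈ subdivSet ε k, IsTransfer e₀ σ i₀ τ := by
  obtain ⟨ℓ, hℓe, hℓp⟩ := exists_snd_eq hσ (e := (σ i₀).1)
    (p := subCount σ (σ i₀).1 - 1) (by have := snd_lt_subCount hσ i₀; omega)
  have hσ₁ : (σ ∘ Equiv.swap i₀ ℓ) i₀ = σ ℓ := by simp
  refine ⟨_, update_last_mem_subdivSet (comp_perm_mem_subdivSet hσ _) ?_ ?_ ?_,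
    ℓ, ⟨subCount σ e₀, subCount_lt hne⟩, hℓe, ?_, rfl, rfl⟩
  · rw [hσ₁, subCount_comp_perm, hℓe, hℓp]
    have := snd_lt_subCount hσ i₀
    omega
  · rwa [hσ₁, hℓe]
  · rw [subCount_comp_perm]
  · have := snd_lt_subCount hσ i₀
    omega

lemma IsTransfer.subCount_add {e₀ : Fin ε} {σ τ : Fin k → Fin ε × Fin k} {i₀ : Fin k}
    (h : IsTransfer e₀ σ i₀ τ) (e : Fin ε) :
    subCount τ e + (if (σ i₀).1 = e then 1 else 0) = subCount σ e + (if e₀ = e then 1 else 0) := by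
  obtain ⟨ℓ, p, hℓe, -, -, rfl⟩ := h
  have := subCount_update_add (σ ∘ Equiv.swap i₀ ℓ) i₀ (e₀, p) e
  rwa [subCount_comp_perm, comp_apply, Equiv.swap_apply_left, hℓe] at this

lemma IsTransfer.eq_of_eq {e₀ : Fin ε} {σ σ' τ : Fin k → Fin ε × Fin k} {i₀ i₀' : Fin k}
    (h : IsTransfer e₀ σ i₀ τ) (h' : IsTransfer e₀ σ' i₀' τ) (hσ' : Injective σ')
    (hτ : Injective τ) (hcount : subCount σ e₀ = subCount σ' e₀)
    (hslot : σ i₀ = σ' i₀') : σ = σ' ∧ i₀ = i₀' := by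
  obtain ⟨ℓ, p, hℓe, hℓp, hp, rfl⟩ := h
  obtain ⟨ℓ', p', hℓe', hℓp', hp', hττ⟩ := h'
  obtain rfl : i₀ = i₀' := hτ <| by
    rw [update_self, hττ, update_self, Fin.ext (hp.trans (hcount.trans hp'.symm))]
  set σ₁ := σ ∘ Equiv.swap i₀ ℓ
  set σ₁' := σ' ∘ Equiv.swap i₀ ℓ'
  have hoff : ∀ i ≠ i₀, σ₁ i = σ₁' i := fun i hi => by
    simpa [update_of_ne hi] using congrFun hττ i
  have hedge : ∀ i, (σ₁ i).1 = (σ₁' i).1 := fun i => by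
    rcases eq_or_ne i i₀ with rfl | hi
    · simp [σ₁, σ₁', hℓe, hℓe', hslot]
    · rw [hoff i hi]
  have hc : subCount σ (σ i₀).1 = subCount σ' (σ' i₀).1 := by
    rw [← subCount_comp_perm σ (Equiv.swap i₀ ℓ), ← subCount_comp_perm σ' (Equiv.swap i₀ ℓ'),
      hslot]
    exact congrArg card (filter_congr fun i _ => by rw [hedge i])
  have h₁ : σ₁ = σ₁' := funext fun i => by
    rcases eq_or_ne i i₀ with rfl | hi
    · refine Prod.ext (hedge i) (Fin.ext ?_)
      simp only [σ₁, σ₁', comp_apply, Equiv.swap_apply_left]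
      omega
    · exact hoff i hi
  obtain rfl : ℓ = ℓ' := (hσ'.comp (Equiv.swap i₀ ℓ').injective) <|
    calc σ₁' ℓ = σ₁ ℓ := by rw [h₁]
      _ = σ₁' ℓ' := by simp [σ₁, σ₁', hslot]
  refine ⟨funext fun i => ?_, rfl⟩
  simpa [σ₁, σ₁'] using congrFun h₁ (Equiv.swap i₀ ℓ i)

end Subdivision

section Switching

variable {ε : ℕ}

def subdivWithCount (k : ℕ) (e₀ : Fin ε) (m : ℕ) : Finset (Fin k → Fin ε × Fin k) :=
  {σ ∈ subdivSet ε k | subCount σ e₀ = m}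

variable {k : ℕ}

lemma card_filter_snd_le_subCount_le (τ : Fin k → Fin ε × Fin k) :
    #({q | (q.2 : ℕ) ≤ subCount τ q.1} : Finset (Fin ε × Fin k)) ≤ k + ε := by
  rw [card_filter, Fintype.sum_prod_type]
  calc ∑ e, ∑ p : Fin k, (if (p : ℕ) ≤ subCount τ e then 1 else 0)
      ≤ ∑ e, (subCount τ e + 1) := sum_le_sum fun e _ => by
        rw [← card_filter, ← card_range (subCount τ e + 1)]
        exact card_le_card_of_injOn Fin.val (fun p hp => by simpa [Nat.lt_succ_iff] using hp)
          Fin.val_injective.injOn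
    _ = k + ε := by simp [sum_add_distrib, sum_subCount]

lemma card_filter_fst_ne (σ : Fin k → Fin ε × Fin k) (e₀ : Fin ε) :
    #({i | (σ i).1 ≠ e₀} : Finset (Fin k)) = k - subCount σ e₀ := by
  have := card_filter_add_card_filter_not (s := univ) fun i => (σ i).1 = e₀
  rw [card_univ, Fintype.card_fin] at this
  simp only [subCount, ne_eq]
  omega

lemma card_le_card_of_isTransfer (e₀ : Fin ε) (m : ℕ) :
    #{x ∈ subdivWithCount k e₀ m ×ˢ (univ : Finset (Fin k)) | (x.1 x.2).1 ≠ e₀} ≤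
      #{y ∈ subdivWithCount k e₀ (m + 1) ×ˢ (univ : Finset (Fin ε × Fin k)) |
        (y.2.2 : ℕ) ≤ subCount y.1 y.2.1} := by
  refine card_le_card_of_forall_subsingleton
    (fun x y => y.2 = x.1 x.2 ∧ IsTransfer e₀ x.1 x.2 y.1) (fun ⟨σ, i₀⟩ hx => ?_)
    (fun ⟨τ, q⟩ hy => ?_)
  · simp only [subdivWithCount, mem_filter, mem_product, mem_univ, and_true] at hx
    obtain ⟨⟨hσ, hm⟩, hne⟩ := hx
    obtain ⟨τ, hτ, htr⟩ := exists_isTransfer hσ hne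
    have h₀ := htr.subCount_add e₀
    have h₁ := htr.subCount_add (σ i₀).1
    have := snd_lt_subCount hσ i₀
    simp only [if_neg hne, if_neg (Ne.symm hne), if_true] at h₀ h₁
    refine ⟨(τ, σ i₀), ?_, rfl, htr⟩
    simp only [subdivWithCount, mem_filter, mem_product, mem_univ, and_true]
    exact ⟨⟨hτ, by omega⟩, by omega⟩
  · rintro ⟨σ, i₀⟩ ⟨hx, rfl, htr⟩ ⟨σ', i₀'⟩ ⟨hx', hslot, htr'⟩
    simp only [subdivWithCount, mem_filter, mem_product, mem_univ, and_true] at hx hx' hy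
    obtain ⟨rfl, rfl⟩ := htr.eq_of_eq htr' (mem_subdivSet_iff.1 hx'.1.1).1
      (mem_subdivSet_iff.1 hy.1.1).1 (hx.1.2.trans hx'.1.2.symm) hslot
    rfl

lemma sub_mul_card_subdivWithCount_le (e₀ : Fin ε) (m : ℕ) :
    (k - m) * #(subdivWithCount k e₀ m) ≤ (k + ε) * #(subdivWithCount k e₀ (m + 1)) := by
  have hoff : #{x ∈ subdivWithCount k e₀ m ×ˢ (univ : Finset (Fin k)) | (x.1 x.2).1 ≠ e₀} =
      #(subdivWithCount k e₀ m) * (k - m) := by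
    rw [card_filter, sum_product]
    refine sum_const_nat fun σ hσ => ?_
    rw [← card_filter, card_filter_fst_ne, (mem_filter.1 hσ).2]
  have hslots : #{y ∈ subdivWithCount k e₀ (m + 1) ×ˢ (univ : Finset (Fin ε × Fin k)) |
      (y.2.2 : ℕ) ≤ subCount y.1 y.2.1} ≤ #(subdivWithCount k e₀ (m + 1)) * (k + ε) := by
    rw [card_filter, sum_product]
    exact sum_le_card_nsmul _ _ _ fun τ _ => by
      rw [← card_filter]
      exact card_filter_snd_le_subCount_le τ
  rw [mul_comm, ← hoff, mul_comm]
  exact (card_le_card_of_isTransfer e₀ m).trans hslots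

lemma sum_card_subdivWithCount (e₀ : Fin ε) (I : Finset ℕ) :
    ∑ m ∈ I, #(subdivWithCount k e₀ m) = #{σ ∈ subdivSet ε k | subCount σ e₀ ∈ I} :=
  sum_card_fiberwise_eq_card_filter _ _ _

end Switching

lemma le_pow_mul_of_le_mul_succ {a : ℕ → ℝ} {ρ : ℝ} (hρ : 0 ≤ ρ) {M : ℕ}
    (hstep : ∀ t < M, a t ≤ ρ * a (t + 1)) {m : ℕ} :
    ∀ d, m + d ≤ M → a m ≤ ρ ^ d * a (m + d)
  | 0, _ => by simp
  | d + 1, h =>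
    calc a m ≤ ρ ^ d * a (m + d) := le_pow_mul_of_le_mul_succ hρ hstep d (by omega)
      _ ≤ ρ ^ d * (ρ * a (m + d + 1)) :=
        mul_le_mul_of_nonneg_left (hstep _ (by omega)) (pow_nonneg hρ _)
      _ = ρ ^ (d + 1) * a (m + (d + 1)) := by rw [pow_succ, ← add_assoc]; ring

/-- Every term `a m` with `m ≤ j` is at most `ρ ^ M` times each of the `M - j` terms
`a (j + 1), …, a M`. -/
lemma sub_mul_sum_range_le {a : ℕ → ℝ} {ρ : ℝ} (ha : ∀ m, 0 ≤ a m) (hρ : 1 ≤ ρ) {M : ℕ}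
    (hstep : ∀ t < M, a t ≤ ρ * a (t + 1)) (j : ℕ) :
    ((M - j : ℕ) : ℝ) * ∑ m ∈ range (j + 1), a m ≤ (j + 1) * ρ ^ M * ∑ m ∈ Ioc j M, a m := by
  have hdom : ∀ m ∈ range (j + 1), ∀ m' ∈ Ioc j M, a m ≤ ρ ^ M * a m' := by
    intro m hm m' hm'
    rw [mem_range] at hm
    rw [mem_Ioc] at hm'
    calc a m ≤ ρ ^ (m' - m) * a (m + (m' - m)) :=
          le_pow_mul_of_le_mul_succ (by linarith) hstep _ (by omega)
      _ ≤ ρ ^ M * a m' := by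
        rw [Nat.add_sub_cancel' (by omega)]
        gcongr
        · exact ha m'
        · omega
  calc ((M - j : ℕ) : ℝ) * ∑ m ∈ range (j + 1), a m
      = ∑ m ∈ range (j + 1), ∑ _m' ∈ Ioc j M, a m := by simp [mul_sum]
    _ ≤ ∑ _m ∈ range (j + 1), ∑ m' ∈ Ioc j M, ρ ^ M * a m' :=
        sum_le_sum fun m hm => sum_le_sum fun m' hm' => hdom m hm m' hm'
    _ = (j + 1) * ρ ^ M * ∑ m ∈ Ioc j M, a m := by simp [← mul_sum, mul_assoc]

lemma one_add_pow_le_exp {x : ℝ} (hx : 0 ≤ 1 + x) (n : ℕ) : (1 + x) ^ n ≤ Real.exp (n * x) := by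
  rw [Real.exp_nat_mul]
  exact pow_le_pow_left₀ hx (by linarith [Real.add_one_le_exp x]) n

section Probability

variable {ε k : ℕ}

lemma sub_mul_card_filter_subCount_le (e₀ : Fin ε) (j : ℕ) {M : ℕ} (hM : M < k) :
    ((M - j : ℕ) : ℝ) * #{σ ∈ subdivSet ε k | subCount σ e₀ ≤ j} ≤
      (j + 1) * (((k : ℝ) + ε) / (k - M)) ^ M * #(subdivSet ε k) := by
  set a : ℕ → ℝ := fun m => #(subdivWithCount k e₀ m)
  have hkM : (0 : ℝ) < k - M := sub_pos.2 (by exact_mod_cast hM)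
  have hstep : ∀ t < M, a t ≤ ((k : ℝ) + ε) / (k - M) * a (t + 1) := by
    intro t ht
    have hswitch : ((k : ℝ) - t) * a t ≤ (k + ε) * a (t + 1) := by
      have := sub_mul_card_subdivWithCount_le (k := k) e₀ t
      rw [← Nat.cast_le (α := ℝ)] at this
      push_cast [Nat.cast_sub (ht.trans hM).le] at this
      exact this
    have : ((k : ℝ) - M) * a t ≤ ((k : ℝ) - t) * a t := by gcongr
    rw [div_mul_eq_mul_div, le_div_iff₀ hkM]
    linarith
  have hρ : 1 ≤ ((k : ℝ) + ε) / (k - M) := by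
    rw [le_div_iff₀ hkM]
    linarith [(Nat.cast_nonneg M : (0 : ℝ) ≤ M), (Nat.cast_nonneg ε : (0 : ℝ) ≤ ε)]
  have hnum : (#{σ ∈ subdivSet ε k | subCount σ e₀ ≤ j} : ℝ) = ∑ m ∈ range (j + 1), a m := by
    simp only [a]
    rw_mod_cast [sum_card_subdivWithCount]
    simp only [mem_range, Nat.lt_succ_iff]
  have hden : ∑ m ∈ Ioc j M, a m ≤ #(subdivSet ε k) := by
    simp only [a]
    exact_mod_cast (sum_card_subdivWithCount e₀ _).trans_le (card_filter_le _ _)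
  rw [hnum]
  exact (sub_mul_sum_range_le (fun m => Nat.cast_nonneg _) hρ hstep j).trans
    (mul_le_mul_of_nonneg_left hden (by positivity))

lemma card_filter_subCount_le_div_le (e₀ : Fin ε) {j M : ℕ} (hjM : j < M) (hM : 2 ≤ M)
    (hMM : M * M ≤ k) (hMε : M * ε ≤ k) :
    (#{σ ∈ subdivSet ε k | subCount σ e₀ ≤ j} : ℝ) / #(subdivSet ε k) ≤
      (j + 1) * Real.exp 4 / (M - j) := by
  have hMk : 2 * M ≤ k := (Nat.mul_le_mul_right M hM).trans hMM
  have hMk' : (2 : ℝ) * M ≤ k := by exact_mod_cast hMk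
  have hMM' : (M : ℝ) * M ≤ k := by exact_mod_cast hMM
  have hMε' : (M : ℝ) * ε ≤ k := by exact_mod_cast hMε
  have hkM : (0 : ℝ) < k - M := by
    have : (0 : ℝ) < M := by exact_mod_cast (by omega : 0 < M)
    linarith
  have hjM' : (0 : ℝ) < M - j := sub_pos.2 (by exact_mod_cast hjM)
  have hpow : (((k : ℝ) + ε) / (k - M)) ^ M ≤ Real.exp 4 := by
    have hx : ((k : ℝ) + ε) / (k - M) = 1 + (ε + M) / (k - M) := by field_simp; ring
    rw [hx]
    refine (one_add_pow_le_exp (by positivity) M).trans (Real.exp_le_exp.2 ?_)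
    rw [← mul_div_assoc, div_le_iff₀ hkM]
    nlinarith
  have hbound := sub_mul_card_filter_subCount_le e₀ j (by omega : M < k)
  rw [Nat.cast_sub hjM.le] at hbound
  rcases (Nat.cast_nonneg (α := ℝ) #(subdivSet ε k)).eq_or_lt with hT | hT
  · rw [← hT, div_zero]
    positivity
  rw [div_le_div_iff₀ hT hjM']
  calc _ = ((M : ℝ) - j) * #{σ ∈ subdivSet ε k | subCount σ e₀ ≤ j} := by ring
    _ ≤ _ := hbound
    _ ≤ (j + 1) * Real.exp 4 * #(subdivSet ε k) := by gcongr

end Probability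

lemma eventually_mul_le_of_isLittleO {a b : ℕ → ℕ}
    (h : (fun n => (a n : ℝ)) =o[atTop] (fun n => (b n : ℝ))) (c : ℕ) :
    ∀ᶠ n in atTop, c * a n ≤ b n := by
  filter_upwards [h.def (show (0 : ℝ) < 1 / (c + 1) by positivity)] with n hn
  simp only [Real.norm_natCast] at hn
  have : (c : ℝ) * a n ≤ b n :=
    calc (c : ℝ) * a n ≤ (c + 1) * a n := by gcongr; linarith
      _ ≤ (c + 1) * (1 / (c + 1) * b n) := by gcongr
      _ = b n := by field_simp
  exact_mod_cast this

lemma tendsto_min_sqrt_div_atTop {a b : ℕ → ℕ} (ha : ∀ n, 0 < a n)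
    (h : (fun n => (a n : ℝ)) =o[atTop] (fun n => (b n : ℝ))) :
    Tendsto (fun n => min (Nat.sqrt (b n)) (b n / a n)) atTop atTop := by
  refine tendsto_atTop.2 fun B => ?_
  filter_upwards [eventually_mul_le_of_isLittleO h B, eventually_mul_le_of_isLittleO h (B * B)]
    with n h₁ h₂
  exact le_min (Nat.le_sqrt.2 ((Nat.le_mul_of_pos_right _ (ha n)).trans h₂))
    ((Nat.le_div_iff_mul_le (ha n)).2 h₁)

theorem stmt12_general (eK k : ℕ → ℕ) (ed : ∀ n, Fin (eK n))
    (ho : (fun n => (eK n : ℝ)) =o[Filter.atTop] (fun n => (k n : ℝ))) (j : ℕ) :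
    Tendsto (fun n =>
        (((subdivSet (eK n) (k n)).filter (fun σ => subCount σ (ed n) ≤ j)).card : ℝ)
          / ((subdivSet (eK n) (k n)).card : ℝ)) atTop (nhds 0) := by
  set M := fun n => min (Nat.sqrt (k n)) (k n / eK n)
  have hM : Tendsto M atTop atTop := tendsto_min_sqrt_div_atTop (fun n => (ed n).pos) ho
  have hbound : Tendsto (fun n => ((j : ℝ) + 1) * Real.exp 4 / ((M n : ℝ) - j)) atTop (nhds 0) :=
    tendsto_const_nhds.div_atTop
      (tendsto_atTop_add_const_right _ _ (tendsto_natCast_atTop_atTop.comp hM))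
  refine tendsto_of_tendsto_of_tendsto_of_le_of_le' tendsto_const_nhds hbound
    (Eventually.of_forall fun n => by positivity) ?_
  filter_upwards [hM.eventually_ge_atTop (j + 2)] with n hn
  exact card_filter_subCount_le_div_le (ed n) (by omega) (by omega)
    ((Nat.mul_self_le_mul_self (min_le_left _ _)).trans (Nat.sqrt_le _))
    ((Nat.mul_le_mul_right _ (min_le_right _ _)).trans (Nat.div_mul_le_self _ _))

/-- if `e(K) = o(k)`, then for a uniformly random core with kernel `K` and
`k` subdivision vertices (equivalently, uniformly random subdivision of `K` by `k` vertices),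
the subdivision number of any fixed edge `e` tends to infinity whp: for every fixed `j`,
the probability that at most `j` subdivision vertices are placed on `e` is `o(1)`. -/
theorem stmt12 (eK k : ℕ → ℕ) (hpos : ∀ n, 0 < eK n) (ed : ∀ n, Fin (eK n))
    (ho : (fun n => (eK n : ℝ)) =o[Filter.atTop] (fun n => (k n : ℝ))) (j : ℕ) :
    Tendsto (fun n =>
        (((subdivSet (eK n) (k n)).filter (fun σ => subCount σ (ed n) ≤ j)).card : ℝ)
          / ((subdivSet (eK n) (k n)).card : ℝ)) atTop (nhds 0) :=
  stmt12_general eK k ed ho j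
end
end
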